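/- arXiv:2407.00216 — 4 statements merged into one kernel-verified Lean document; each statement's English description precedes it below -/
import Mathlib

section
/- The rate functional I is a good rate functional on (ℝ^d)^{𝒳×𝒳} × 𝒫(𝒳×𝒳): it is lower semicontinuous and all of its sublevel sets {(k,θ) : I(k,θ) ≤ c}, c ∈ [0,∞), are compact. -/
open MeasureTheory ProbabilityTheory Filter
open scoped ENNReal Classical

noncomputable section

/-- The ℓ¹-norm on `ℝ^d`. -/
def l1norm {d : ℕ} (a : Fin d → ℝ) : ℝ := ∑ i, |a i|

/-- Euclidean dot product on `ℝ^d`. -/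
def dotp {d : ℕ} (l a : Fin d → ℝ) : ℝ := ∑ i, l i * a i

/-- The logarithmic moment generating function `φ(λ) = log ∫ e^{λ·a} q(da) ∈ (-∞,∞]`. -/
def logMGF {d : ℕ} (q : Measure (Fin d → ℝ)) (l : Fin d → ℝ) : EReal :=
  ENNReal.log (∫⁻ a, ENNReal.ofReal (Real.exp (dotp l a)) ∂q)

/-- Legendre transform `φ*(a) = sup_λ [λ·a - φ(λ)]`. -/
def cramerTransform {d : ℕ} (q : Measure (Fin d → ℝ)) (a : Fin d → ℝ) : EReal :=
  ⨆ l : Fin d → ℝ, ((dotp l a : ℝ) : EReal) - logMGF q l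

/-- `φ_{|·|}(s) = log ∫ e^{s|a|₁} q(da)`. -/
def logMGFAbs {d : ℕ} (q : Measure (Fin d → ℝ)) (s : ℝ) : EReal :=
  ENNReal.log (∫⁻ a, ENNReal.ofReal (Real.exp (s * l1norm a)) ∂q)

/-- `φ*_{|·|}(r) = sup_s [rs - φ_{|·|}(s)]`. -/
def cramerTransformAbs {d : ℕ} (q : Measure (Fin d → ℝ)) (r : ℝ) : EReal :=
  ⨆ s : ℝ, ((r * s : ℝ) : EReal) - logMGFAbs q s

/-- Superlinear growth: `liminf_{r→∞} φ*_{|·|}(r)/r = ∞`. -/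
def Superlinear {d : ℕ} (q : Measure (Fin d → ℝ)) : Prop :=
  Filter.liminf (fun r : ℝ => cramerTransformAbs q r / (r : EReal)) Filter.atTop = ⊤

/-- The Boltzmann function `s(a|b)`. -/
def sEnt (a b : ℝ) : EReal :=
  if 0 < a ∧ 0 < b then ((a * Real.log (a / b) - a + b : ℝ) : EReal)
  else if a = 0 ∧ 0 ≤ b then ((b : ℝ) : EReal)
  else ⊤

/-- The rate functional `I(k,θ)` of Theorem 1 (extended by `∞` off the probability simplex). -/
def rateI {𝒳 : Type*} [Fintype 𝒳] {d : ℕ} (P : 𝒳 → 𝒳 → ℝ)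
    (q : 𝒳 → 𝒳 → Measure (Fin d → ℝ)) (k : 𝒳 × 𝒳 → (Fin d → ℝ)) (θ : 𝒳 × 𝒳 → ℝ) : EReal :=
  if (∀ p : 𝒳 × 𝒳, θ p = 0 → k p = 0) ∧ (∀ x : 𝒳, ∑ y, θ (x, y) = ∑ y, θ (y, x)) ∧
      θ ∈ stdSimplex ℝ (𝒳 × 𝒳) then
    (∑ p : 𝒳 × 𝒳, ((θ p : ℝ) : EReal) * cramerTransform (q p.1 p.2) ((θ p)⁻¹ • k p)) +
      ∑ p : 𝒳 × 𝒳, sEnt (θ p) ((∑ y, θ (p.1, y)) * P p.1 p.2)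
  else ⊤

lemma sEnt_eq_iSup (a b : ℝ) :
    sEnt a b = ⨆ t : ℝ, ((a * t - b * (Real.exp t - 1) : ℝ) : EReal) := by
  rcases lt_trichotomy a 0 with ha | ha | ha
  · -- a < 0 : both sides ⊤
    have h1 : sEnt a b = ⊤ := by
      rw [sEnt, if_neg (by rintro ⟨h, -⟩; linarith), if_neg (by rintro ⟨h, -⟩; linarith)]
    rw [h1]; symm
    rw [iSup_eq_top]
    intro c hc
    induction c with
    | bot => exact ⟨0, by simp [bot_lt_iff_ne_bot]⟩
    | coe c =>
      obtain ⟨n, hn⟩ : ∃ n : ℕ, c + 2 * |b| < (-a) * n := by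
        obtain ⟨n, hn⟩ := exists_nat_gt ((c + 2 * |b|) / (-a))
        exact ⟨n, by rw [div_lt_iff₀ (by linarith)] at hn; linarith [hn]⟩
      refine ⟨-(n : ℝ), ?_⟩
      rw [show ((c : ℝ) : EReal) < _ ↔ _ from EReal.coe_lt_coe_iff]
      have he : Real.exp (-(n:ℝ)) ≤ 1 := by
        rw [Real.exp_le_one_iff]; simp
      have he' : 0 < Real.exp (-(n:ℝ)) := Real.exp_pos _
      have hb1 : b * (Real.exp (-(n:ℝ)) - 1) ≤ |b| * 1 := by
        calc b * (Real.exp (-(n:ℝ)) - 1) ≤ |b * (Real.exp (-(n:ℝ)) - 1)| := le_abs_self _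
          _ = |b| * |Real.exp (-(n:ℝ)) - 1| := abs_mul _ _
          _ ≤ |b| * 1 := by
              apply mul_le_mul_of_nonneg_left _ (abs_nonneg b)
              rw [abs_le]; constructor <;> nlinarith
      nlinarith [abs_nonneg b]
    | top => exact absurd hc (lt_irrefl _)
  · -- a = 0
    subst ha
    rcases lt_trichotomy b 0 with hb | hb | hb
    · have h1 : sEnt 0 b = ⊤ := by
        rw [sEnt, if_neg (by rintro ⟨h, -⟩; linarith), if_neg (by rintro ⟨-, h⟩; linarith)]
      rw [h1]; symm
      rw [iSup_eq_top]
      intro c hc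
      induction c with
      | bot => exact ⟨0, by simp [bot_lt_iff_ne_bot]⟩
      | coe c =>
        obtain ⟨n, hn⟩ : ∃ n : ℕ, c < (-b) * n := by
          obtain ⟨n, hn⟩ := exists_nat_gt (c / (-b))
          exact ⟨n, by rw [div_lt_iff₀ (by linarith)] at hn; linarith [hn]⟩
        refine ⟨(n : ℝ), ?_⟩
        rw [show ((c : ℝ) : EReal) < _ ↔ _ from EReal.coe_lt_coe_iff]
        have he : (n : ℝ) + 1 ≤ Real.exp (n : ℝ) := by
          have := Real.add_one_le_exp (n : ℝ); linarith
        nlinarith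
      | top => exact absurd hc (lt_irrefl _)
    · subst hb
      have h1 : sEnt 0 0 = ((0:ℝ) : EReal) := by
        rw [sEnt, if_neg (by rintro ⟨h, -⟩; linarith), if_pos ⟨rfl, le_refl _⟩]
      rw [h1]; symm
      apply le_antisymm
      · apply iSup_le; intro t; simp
      · exact le_iSup_of_le 0 (by norm_num)
    · have h1 : sEnt 0 b = ((b:ℝ) : EReal) := by
        rw [sEnt, if_neg (by rintro ⟨h, -⟩; linarith), if_pos ⟨rfl, le_of_lt hb⟩]
      rw [h1]; symm
      apply le_antisymm
      · apply iSup_le; intro t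
        rw [EReal.coe_le_coe_iff]
        have := Real.exp_pos t; nlinarith
      · -- b ≤ iSup, via limit along t = -n
        have htend : Filter.Tendsto (fun n : ℕ => ((0 * (-(n:ℝ)) - b * (Real.exp (-(n:ℝ)) - 1) : ℝ) : EReal))
            Filter.atTop (nhds ((b : ℝ) : EReal)) := by
          apply Filter.Tendsto.comp (continuous_coe_real_ereal.tendsto _)
          have : Filter.Tendsto (fun n : ℕ => Real.exp (-(n:ℝ))) Filter.atTop (nhds 0) := by
            apply Real.tendsto_exp_atBot.comp
            exact Filter.tendsto_neg_atBot_iff.mpr tendsto_natCast_atTop_atTop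
          have h2 : Filter.Tendsto (fun n : ℕ => (b - b * Real.exp (-(n:ℝ)) : ℝ))
              Filter.atTop (nhds (b - b * 0)) := tendsto_const_nhds.sub (this.const_mul b)
          have h3 : (fun n : ℕ => (0 * (-(n:ℝ)) - b * (Real.exp (-(n:ℝ)) - 1) : ℝ))
              = fun n : ℕ => (b - b * Real.exp (-(n:ℝ)) : ℝ) := by funext n; ring
          rw [h3]; simpa using h2
        apply le_of_tendsto htend
        filter_upwards with n
        exact le_iSup (fun t : ℝ => ((0 * t - b * (Real.exp t - 1) : ℝ) : EReal)) (-(n:ℝ))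
  · -- a > 0
    rcases le_or_gt b 0 with hb | hb
    · have h1 : sEnt a b = ⊤ := by
        rw [sEnt, if_neg (by rintro ⟨-, h⟩; linarith), if_neg (by rintro ⟨h, -⟩; linarith)]
      rw [h1]; symm
      rw [iSup_eq_top]
      intro c hc
      induction c with
      | bot => exact ⟨0, by simp [bot_lt_iff_ne_bot]⟩
      | coe c =>
        obtain ⟨n, hn⟩ : ∃ n : ℕ, c < a * n := by
          obtain ⟨n, hn⟩ := exists_nat_gt (c / a)
          exact ⟨n, by rw [div_lt_iff₀ ha] at hn; linarith [hn]⟩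
        refine ⟨(n : ℝ), ?_⟩
        rw [show ((c : ℝ) : EReal) < _ ↔ _ from EReal.coe_lt_coe_iff]
        have he : (n:ℝ) + 1 ≤ Real.exp (n:ℝ) := by
          have := Real.add_one_le_exp (n : ℝ); linarith
        nlinarith
      | top => exact absurd hc (lt_irrefl _)
    · have h1 : sEnt a b = ((a * Real.log (a / b) - a + b : ℝ) : EReal) := by
        rw [sEnt, if_pos ⟨ha, hb⟩]
      rw [h1]; symm
      apply le_antisymm
      · apply iSup_le; intro t
        rw [EReal.coe_le_coe_iff]
        -- at - b(e^t - 1) ≤ a log(a/b) - a + b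
        set t₀ := Real.log (a / b) with ht₀
        have he : Real.exp t₀ = a / b := Real.exp_log (by positivity)
        have key : Real.exp t₀ * (1 + (t - t₀)) ≤ Real.exp t := by
          have h2 := Real.add_one_le_exp (t - t₀)
          calc Real.exp t₀ * (1 + (t - t₀)) ≤ Real.exp t₀ * Real.exp (t - t₀) := by
                apply mul_le_mul_of_nonneg_left _ (Real.exp_pos t₀).le
                linarith
            _ = Real.exp t := by rw [← Real.exp_add]; ring_nf
        have he2 : Real.exp t₀ * (1 + (t - t₀)) = (a/b) * (1 + (t - t₀)) := by rw [he]
        have hb' : b ≠ 0 := ne_of_gt hb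
        have : b * Real.exp t ≥ a * (1 + (t - t₀)) := by
          calc b * Real.exp t ≥ b * (Real.exp t₀ * (1 + (t - t₀))) :=
                mul_le_mul_of_nonneg_left key hb.le
            _ = a * (1 + (t - t₀)) := by rw [he]; field_simp
        nlinarith
      · exact le_iSup_of_le (Real.log (a / b)) (by
          rw [EReal.coe_le_coe_iff]
          have he : Real.exp (Real.log (a/b)) = a / b := Real.exp_log (by positivity)
          have hb' : b ≠ 0 := ne_of_gt hb
          rw [he]; field_simp; ring_nf; rfl)

lemma sEnt_nonneg (a b : ℝ) : (0:EReal) ≤ sEnt a b := by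
  rw [sEnt_eq_iSup]
  apply le_iSup_of_le 0
  norm_num

lemma sEnt_lsc : LowerSemicontinuous (fun ab : ℝ × ℝ => sEnt ab.1 ab.2) := by
  have h : (fun ab : ℝ × ℝ => sEnt ab.1 ab.2)
      = fun ab : ℝ × ℝ => ⨆ t : ℝ, ((ab.1 * t - ab.2 * (Real.exp t - 1) : ℝ) : EReal) := by
    funext ab; exact sEnt_eq_iSup ab.1 ab.2
  rw [h]
  apply lowerSemicontinuous_iSup
    (f := fun (t : ℝ) (ab : ℝ × ℝ) => ((ab.1 * t - ab.2 * (Real.exp t - 1) : ℝ) : EReal))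
  intro t
  apply Continuous.lowerSemicontinuous
  apply continuous_coe_real_ereal.comp
  exact (continuous_fst.mul continuous_const).sub (continuous_snd.mul continuous_const)

lemma lsc_ite {X : Type*} [TopologicalSpace X] {s : Set X} (hs : IsClosed s) {g : X → EReal}
    (hg : LowerSemicontinuous g) :
    LowerSemicontinuous (fun x => if x ∈ s then g x else (⊤:EReal)) := by
  intro x y hy
  simp only at hy
  by_cases hx : x ∈ s
  · rw [if_pos hx] at hy
    filter_upwards [hg x y hy] with z hz
    by_cases hzs : z ∈ s
    · show y < if z ∈ s then g z else ⊤
      rwa [if_pos hzs]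
    · show y < if z ∈ s then g z else ⊤
      rw [if_neg hzs]
      exact lt_of_lt_of_le hz le_top
  · rw [if_neg hx] at hy
    filter_upwards [hs.isOpen_compl.mem_nhds hx] with z hz
    show y < if z ∈ s then g z else ⊤
    rw [if_neg hz]
    exact hy

lemma lsc_finset_sum {X : Type*} [TopologicalSpace X] {ι : Type*} (s : Finset ι)
    (f : ι → X → EReal) (hf : ∀ i, LowerSemicontinuous (f i)) (h0 : ∀ i x, 0 ≤ f i x) :
    LowerSemicontinuous (fun x => ∑ i ∈ s, f i x) := by
  classical
  induction s using Finset.induction_on with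
  | empty => simpa using lowerSemicontinuous_const
  | @insert a s ha ih =>
    have : (fun x => ∑ i ∈ insert a s, f i x) = fun x => f a x + ∑ i ∈ s, f i x := by
      funext x; rw [Finset.sum_insert ha]
    rw [this]
    apply LowerSemicontinuous.add' (hf a) ih
    intro x
    apply EReal.continuousAt_add
    · right
      show ∑ i ∈ s, f i x ≠ ⊥
      intro hbot
      have := Finset.sum_nonneg (fun i (_ : i ∈ s) => h0 i x)
      rw [hbot] at this
      simp at this
    · left
      show f a x ≠ ⊥
      intro hbot
      have := h0 a x
      rw [hbot] at this
      simp at this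

lemma ereal_sum_eq_top {ι : Type*} {s : Finset ι} {f : ι → EReal} (h0 : ∀ i ∈ s, 0 ≤ f i)
    {i₀ : ι} (hi₀ : i₀ ∈ s) (htop : f i₀ = ⊤) : ∑ i ∈ s, f i = ⊤ :=
  top_le_iff.1 (htop ▸ Finset.single_le_sum h0 hi₀)

lemma ereal_top_add_of_nonneg {x : EReal} (h : 0 ≤ x) : (⊤:EReal) + x = ⊤ :=
  EReal.top_add_of_ne_bot (fun hb => by rw [hb] at h; simp at h)

section MGF
variable {d : ℕ} (q : Measure (Fin d → ℝ)) [IsProbabilityMeasure q]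

lemma continuous_dotp (l : Fin d → ℝ) : Continuous (fun a : Fin d → ℝ => dotp l a) := by
  unfold dotp
  exact continuous_finset_sum _ fun i _ => continuous_const.mul (continuous_apply i)

lemma continuous_l1norm : Continuous (fun a : Fin d → ℝ => l1norm a) := by
  unfold l1norm
  exact continuous_finset_sum _ fun i _ => (continuous_apply i).abs

lemma measurable_expdot (l : Fin d → ℝ) :
    Measurable (fun a : Fin d → ℝ => ENNReal.ofReal (Real.exp (dotp l a))) :=
  (ENNReal.continuous_ofReal.comp (Real.continuous_exp.comp (continuous_dotp l))).measurable

lemma measurable_expabs (s : ℝ) :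
    Measurable (fun a : Fin d → ℝ => ENNReal.ofReal (Real.exp (s * l1norm a))) :=
  (ENNReal.continuous_ofReal.comp
    (Real.continuous_exp.comp (continuous_const.mul continuous_l1norm))).measurable

lemma logMGF_ne_bot (l : Fin d → ℝ) : logMGF q l ≠ ⊥ := by
  rw [logMGF, Ne, ENNReal.log_eq_bot_iff, lintegral_eq_zero_iff (measurable_expdot l)]
  intro h
  have h0 : ∀ᵐ a ∂q, ENNReal.ofReal (Real.exp (dotp l a)) = 0 := h
  have hne : (MeasureTheory.ae q).NeBot := MeasureTheory.ae_neBot.2 (IsProbabilityMeasure.ne_zero q)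
  obtain ⟨a, ha⟩ := h0.exists
  have : (0:ℝ) < Real.exp (dotp l a) := Real.exp_pos _
  rw [ENNReal.ofReal_eq_zero] at ha
  linarith

lemma logMGF_zero : logMGF q 0 = 0 := by
  have : (fun a : Fin d → ℝ => ENNReal.ofReal (Real.exp (dotp 0 a))) = fun _ => 1 := by
    funext a; simp [dotp]
  rw [logMGF, this, lintegral_one, measure_univ, ENNReal.log_one]

lemma logMGF_le_logMGFAbs {l : Fin d → ℝ} {s : ℝ} (h : ∀ i, |l i| ≤ s) :
    logMGF q l ≤ logMGFAbs q s := by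
  rw [logMGF, logMGFAbs, ENNReal.log_le_log_iff]
  apply lintegral_mono
  intro a
  apply ENNReal.ofReal_le_ofReal
  apply Real.exp_le_exp.2
  rw [dotp, l1norm, Finset.mul_sum]
  apply Finset.sum_le_sum
  intro i _
  calc l i * a i ≤ |l i * a i| := le_abs_self _
    _ = |l i| * |a i| := abs_mul _ _
    _ ≤ s * |a i| := mul_le_mul_of_nonneg_right (h i) (abs_nonneg _)

lemma logMGFAbs_nonneg {s : ℝ} (hs : 0 ≤ s) : 0 ≤ logMGFAbs q s := by
  rw [logMGFAbs, ENNReal.zero_le_log_iff]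
  calc (1 : ℝ≥0∞) = ∫⁻ _, 1 ∂q := by simp [lintegral_one, measure_univ]
    _ ≤ _ := by
        apply lintegral_mono; intro a
        simp only [← ENNReal.ofReal_one]
        apply ENNReal.ofReal_le_ofReal
        rw [← Real.exp_zero]
        apply Real.exp_le_exp.2
        have : 0 ≤ l1norm a := Finset.sum_nonneg fun i _ => abs_nonneg _
        positivity

lemma logMGFAbs_mono {s s' : ℝ} (h : s ≤ s') (hs : 0 ≤ s) : logMGFAbs q s ≤ logMGFAbs q s' := by
  rw [logMGFAbs, logMGFAbs, ENNReal.log_le_log_iff]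
  apply lintegral_mono; intro a
  apply ENNReal.ofReal_le_ofReal
  apply Real.exp_le_exp.2
  have : 0 ≤ l1norm a := Finset.sum_nonneg fun i _ => abs_nonneg _
  nlinarith

lemma logMGFAbs_ne_top_of_superlinear (hsl : Superlinear q) (s : ℝ) :
    logMGFAbs q s ≠ ⊤ := by
  intro htop
  have hs : 0 < s := by
    by_contra hs
    push_neg at hs
    have h1 : logMGFAbs q s ≤ 0 := by
      rw [logMGFAbs, ENNReal.log_le_zero_iff]
      calc ∫⁻ a, ENNReal.ofReal (Real.exp (s * l1norm a)) ∂q ≤ ∫⁻ _, 1 ∂q := by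
            apply lintegral_mono; intro a
            rw [show (1:ℝ≥0∞) = ENNReal.ofReal 1 by simp]
            apply ENNReal.ofReal_le_ofReal
            rw [← Real.exp_zero]
            apply Real.exp_le_exp.2
            have : 0 ≤ l1norm a := Finset.sum_nonneg fun i _ => abs_nonneg _
            exact mul_nonpos_of_nonpos_of_nonneg hs this
        _ = 1 := by simp [lintegral_one, measure_univ]
    rw [htop] at h1
    exact absurd h1 (by simp)
  obtain ⟨M, hM⟩ : ∃ n : ℕ, q {a | l1norm a ≤ (n:ℝ)} ≠ 0 := by
    by_contra hM; push_neg at hM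
    have h0 : q (⋃ n : ℕ, {a : Fin d → ℝ | l1norm a ≤ (n:ℝ)}) = 0 :=
      measure_iUnion_null hM
    have hcov : (⋃ n : ℕ, {a : Fin d → ℝ | l1norm a ≤ (n:ℝ)}) = Set.univ := by
      ext a
      simp only [Set.mem_iUnion, Set.mem_univ, iff_true, Set.mem_setOf_eq]
      exact exists_nat_ge (l1norm a)
    rw [hcov, measure_univ] at h0
    simp at h0
  set S := {a : Fin d → ℝ | l1norm a ≤ (M:ℝ)} with hS
  have hqS_pos : 0 < (q S).toReal :=
    ENNReal.toReal_pos hM (measure_ne_top q S)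
  set p := (q S).toReal with hp
  set C := -Real.log p with hC
  have hple : p ≤ 1 := by
    rw [hp]
    exact ENNReal.toReal_le_of_le_ofReal one_pos.le (by simpa using prob_le_one)
  have hC0 : 0 ≤ C := by
    rw [hC, neg_nonneg]
    exact Real.log_nonpos hqS_pos.le hple
  have hlow : ∀ s' : ℝ, s' ≤ 0 → ((s' * M + Real.log p : ℝ) : EReal) ≤ logMGFAbs q s' := by
    intro s' hs'
    have h1 : ENNReal.ofReal (Real.exp (s' * M)) * q S
        ≤ ∫⁻ a, ENNReal.ofReal (Real.exp (s' * l1norm a)) ∂q := by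
      calc ENNReal.ofReal (Real.exp (s' * M)) * q S
          = ∫⁻ _ in S, ENNReal.ofReal (Real.exp (s' * M)) ∂q := (setLIntegral_const _ _).symm
        _ ≤ ∫⁻ a in S, ENNReal.ofReal (Real.exp (s' * l1norm a)) ∂q := by
            apply setLIntegral_mono (measurable_expabs s')
            intro a ha
            apply ENNReal.ofReal_le_ofReal
            apply Real.exp_le_exp.2
            have h2 : l1norm a ≤ M := ha
            nlinarith
        _ ≤ _ := lintegral_mono' Measure.restrict_le_self (le_refl _)
    have h2 : ((s' * M + Real.log p : ℝ) : EReal)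
        = ENNReal.log (ENNReal.ofReal (Real.exp (s' * M)) * q S) := by
      rw [ENNReal.log_mul_add]
      rw [EReal.coe_add]
      congr 1
      · have ht : (ENNReal.ofReal (Real.exp (s' * M))).toReal = Real.exp (s' * M) :=
          ENNReal.toReal_ofReal (Real.exp_pos _).le
        rw [ENNReal.log_pos_real' (by rw [ht]; exact Real.exp_pos _), ht, Real.log_exp]
      · rw [ENNReal.log_pos_real' hqS_pos]
    rw [h2, logMGFAbs]
    exact ENNReal.log_monotone h1
  have hupper : ∀ r : ℝ, max (M:ℝ) 1 ≤ r →
      cramerTransformAbs q r ≤ ((r * s + C : ℝ) : EReal) := by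
    intro r hr
    have hrM : (M:ℝ) ≤ r := le_trans (le_max_left _ _) hr
    have hr1 : (1:ℝ) ≤ r := le_trans (le_max_right _ _) hr
    apply iSup_le
    intro s'
    rcases le_or_gt s s' with h1 | h1
    · have h3 : logMGFAbs q s' = ⊤ := top_le_iff.1 (htop ▸ logMGFAbs_mono q h1 hs.le)
      rw [h3]
      have h4 : ((r * s' : ℝ) : EReal) - ⊤ = ⊥ := by
        change ((r * s' : ℝ) : EReal) + (-⊤) = ⊥
        simp
      rw [h4]; exact bot_le
    · rcases le_or_gt 0 s' with h2 | h2
      · have hφ : (0:EReal) ≤ logMGFAbs q s' := logMGFAbs_nonneg q h2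
        calc ((r * s' : ℝ) : EReal) - logMGFAbs q s'
            ≤ ((r * s' : ℝ) : EReal) - 0 := EReal.sub_le_sub (le_refl _) hφ
          _ = ((r * s' : ℝ) : EReal) := by rw [sub_zero]
          _ ≤ ((r * s + C : ℝ) : EReal) := by
              rw [EReal.coe_le_coe_iff]; nlinarith
      · have hφ := hlow s' h2.le
        calc ((r * s' : ℝ) : EReal) - logMGFAbs q s'
            ≤ ((r * s' : ℝ) : EReal) - ((s' * M + Real.log p : ℝ) : EReal) :=
              EReal.sub_le_sub (le_refl _) hφ
          _ = ((r * s' - (s' * M + Real.log p) : ℝ) : EReal) := by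
              rw [EReal.coe_sub]
          _ ≤ ((r * s + C : ℝ) : EReal) := by
              rw [EReal.coe_le_coe_iff, hC]
              nlinarith
  have hub : ∀ᶠ r : ℝ in atTop,
      cramerTransformAbs q r / (r:EReal) ≤ ((s + C : ℝ) : EReal) := by
    filter_upwards [eventually_ge_atTop (max (M:ℝ) 1)] with r hr
    have hr1 : (1:ℝ) ≤ r := le_trans (le_max_right _ _) hr
    have hrpos : (0:EReal) < (r:EReal) := by
      rw [show (0:EReal) = ((0:ℝ):EReal) from rfl, EReal.coe_lt_coe_iff]; linarith
    rw [EReal.div_le_iff_le_mul hrpos (EReal.coe_ne_top r)]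
    calc cramerTransformAbs q r ≤ ((r * s + C : ℝ) : EReal) := hupper r hr
      _ ≤ (r:EReal) * ((s + C : ℝ) : EReal) := by
          rw [← EReal.coe_mul, EReal.coe_le_coe_iff]
          nlinarith
  have hlim : liminf (fun r : ℝ => cramerTransformAbs q r / (r:EReal)) atTop
      ≤ ((s + C : ℝ) : EReal) := by
    calc liminf (fun r : ℝ => cramerTransformAbs q r / (r:EReal)) atTop
        ≤ liminf (fun _ : ℝ => ((s + C : ℝ) : EReal)) atTop := liminf_le_liminf hub
      _ = ((s + C : ℝ) : EReal) := liminf_const _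
  rw [hsl] at hlim
  exact absurd (top_le_iff.1 hlim) (EReal.coe_ne_top _)

/-- real value of logMGF -/
def phiR {d : ℕ} (q : Measure (Fin d → ℝ)) (l : Fin d → ℝ) : ℝ := (logMGF q l).toReal

def Gfun {d : ℕ} (q : Measure (Fin d → ℝ)) (k : Fin d → ℝ) (t : ℝ) : EReal :=
  ⨆ l : Fin d → ℝ, ((dotp l k - t * phiR q l : ℝ) : EReal)

section GG
variable {d : ℕ} {q : Measure (Fin d → ℝ)} [IsProbabilityMeasure q]

lemma logMGF_ne_top (hsl : Superlinear q) (l : Fin d → ℝ) : logMGF q l ≠ ⊤ := by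
  intro h
  have h1 : logMGF q l ≤ logMGFAbs q (∑ i, |l i|) := by
    apply logMGF_le_logMGFAbs
    intro i
    exact Finset.single_le_sum (f := fun j => |l j|) (fun j _ => abs_nonneg _) (Finset.mem_univ i)
  rw [h] at h1
  exact logMGFAbs_ne_top_of_superlinear q hsl _ (top_le_iff.1 h1)

lemma logMGF_eq_coe (hsl : Superlinear q) (l : Fin d → ℝ) : logMGF q l = ((phiR q l : ℝ) : EReal) :=
  (EReal.coe_toReal (logMGF_ne_top hsl l) (logMGF_ne_bot q l)).symm

lemma phiR_zero : phiR q 0 = 0 := by rw [phiR, logMGF_zero]; rfl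

lemma dotp_zero_left (a : Fin d → ℝ) : dotp 0 a = 0 := by simp [dotp]

lemma dotp_zero_right (l : Fin d → ℝ) : dotp l 0 = 0 := by simp [dotp]

lemma cramer_eq (hsl : Superlinear q) : ∀ a, cramerTransform q a
    = ⨆ l : Fin d → ℝ, ((dotp l a - phiR q l : ℝ) : EReal) := by
  intro a
  rw [cramerTransform]
  congr 1
  funext l
  rw [logMGF_eq_coe hsl, ← EReal.coe_sub]

lemma Gfun_nonneg (k : Fin d → ℝ) (t : ℝ) : (0:EReal) ≤ Gfun q k t := by
  apply le_iSup_of_le 0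
  rw [dotp_zero_left, phiR_zero]
  simp

lemma cramer_nonneg (a : Fin d → ℝ) : (0:EReal) ≤ cramerTransform q a := by
  apply le_iSup_of_le 0
  rw [dotp_zero_left, logMGF_zero]
  simp

lemma Gfun_zero_of_ne {k : Fin d → ℝ} (hk : k ≠ 0) : Gfun q k 0 = ⊤ := by
  rw [Gfun, iSup_eq_top]
  intro c hc
  have hkk : 0 < dotp k k := by
    obtain ⟨i, hi⟩ := Function.ne_iff.1 hk
    rw [dotp]
    apply Finset.sum_pos' (fun j _ => mul_self_nonneg _)
    refine ⟨i, Finset.mem_univ i, ?_⟩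
    have h2 : k i ≠ 0 := hi
    rcases h2.lt_or_gt with h | h
    · exact mul_pos_of_neg_of_neg h h
    · exact mul_pos h h
  induction c with
  | bot =>
    refine ⟨0, ?_⟩
    rw [dotp_zero_left]
    simp [bot_lt_iff_ne_bot]
  | coe c =>
    obtain ⟨n, hn⟩ := exists_nat_gt (c / dotp k k)
    refine ⟨(n:ℝ) • k, ?_⟩
    rw [EReal.coe_lt_coe_iff]
    have hd : dotp ((n:ℝ) • k) k = (n:ℝ) * dotp k k := by
      rw [dotp, dotp, Finset.mul_sum]
      congr 1; funext i; simp [Pi.smul_apply, smul_eq_mul]; ring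
    rw [hd, div_lt_iff₀ hkk] at *
    nlinarith
  | top => exact absurd hc (lt_irrefl _)

lemma Gfun_zero_zero : Gfun q 0 0 = (0:EReal) := by
  rw [Gfun]
  have : ∀ l : Fin d → ℝ, ((dotp l 0 - 0 * phiR q l : ℝ) : EReal) = (0:EReal) := by
    intro l; rw [dotp_zero_right]; norm_num
  simp only [this, iSup_const]

lemma ereal_mul_iSup {ι : Sort*} (t : ℝ) (ht : 0 < t) (f : ι → EReal) :
    (t : EReal) * ⨆ i, f i = ⨆ i, (t : EReal) * f i := by
  have htE : (0:EReal) < t := by exact_mod_cast ht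
  have htop : (t:EReal) ≠ ⊤ := EReal.coe_ne_top _
  apply le_antisymm
  · have h1 : (⨆ i, f i) ≤ (⨆ i, (t:EReal) * f i) / t := by
      apply iSup_le; intro i
      rw [EReal.le_div_iff_mul_le htE htop]
      rw [mul_comm (f i) ((t:ℝ):EReal)]
      exact le_iSup (fun i => (t:EReal) * f i) i
    calc (t:EReal) * ⨆ i, f i ≤ (t:EReal) * ((⨆ i, (t:EReal) * f i)/t) :=
          mul_le_mul_of_nonneg_left h1 (le_of_lt htE)
      _ = ⨆ i, (t:EReal) * f i := EReal.mul_div_cancel (EReal.coe_ne_bot _) htop (ne_of_gt htE)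
  · apply iSup_le; intro i
    exact mul_le_mul_of_nonneg_left (le_iSup f i) (le_of_lt htE)

lemma Gfun_eq (hsl : Superlinear q) {k : Fin d → ℝ} {t : ℝ} (ht : 0 < t) :
    (t : EReal) * cramerTransform q (t⁻¹ • k) = Gfun q k t := by
  rw [cramer_eq hsl, ereal_mul_iSup t ht, Gfun]
  congr 1
  funext l
  rw [← EReal.coe_mul]
  congr 1
  have hd : dotp l (t⁻¹ • k) = t⁻¹ * dotp l k := by
    rw [dotp, dotp, Finset.mul_sum]
    congr 1; funext i; simp [Pi.smul_apply, smul_eq_mul]; ring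
  rw [hd]
  field_simp

lemma Gfun_lsc : LowerSemicontinuous (fun kt : (Fin d → ℝ) × ℝ => Gfun q kt.1 kt.2) := by
  apply lowerSemicontinuous_iSup
    (f := fun (l : Fin d → ℝ) (kt : (Fin d → ℝ) × ℝ) => ((dotp l kt.1 - kt.2 * phiR q l : ℝ) : EReal))
  intro l
  apply Continuous.lowerSemicontinuous
  apply continuous_coe_real_ereal.comp
  exact ((continuous_dotp l).comp continuous_fst).sub (continuous_snd.mul continuous_const)

lemma Gfun_lower_bound (hsl : Superlinear q) (k : Fin d → ℝ) {t : ℝ} (ht0 : 0 ≤ t) (ht1 : t ≤ 1) :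
    ((l1norm k - (logMGFAbs q 1).toReal : ℝ) : EReal) ≤ Gfun q k t := by
  set B := (logMGFAbs q 1).toReal with hB
  have hB0 : 0 ≤ B := by
    have := EReal.toReal_le_toReal (logMGFAbs_nonneg q zero_le_one) (by simp)
      (logMGFAbs_ne_top_of_superlinear q hsl 1)
    simpa using this
  set l : Fin d → ℝ := fun i => if 0 ≤ k i then 1 else -1 with hl
  apply le_iSup_of_le l
  rw [EReal.coe_le_coe_iff]
  have hd : dotp l k = l1norm k := by
    rw [dotp, l1norm]
    congr 1; funext i
    show (if 0 ≤ k i then (1:ℝ) else -1) * k i = |k i|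
    rcases le_or_gt 0 (k i) with h | h
    · rw [if_pos h, abs_of_nonneg h, one_mul]
    · rw [if_neg (not_le.2 h), abs_of_neg h]; ring
  have hphi : phiR q l ≤ B := by
    apply EReal.toReal_le_toReal _ (logMGF_ne_bot q l) (logMGFAbs_ne_top_of_superlinear q hsl 1)
    apply logMGF_le_logMGFAbs
    intro i
    show |if 0 ≤ k i then (1:ℝ) else -1| ≤ 1
    rcases le_or_gt 0 (k i) with h | h
    · rw [if_pos h]; norm_num
    · rw [if_neg (not_le.2 h)]; norm_num
  have : t * phiR q l ≤ B := by
    rcases le_or_gt 0 (phiR q l) with h | h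
    · nlinarith
    · nlinarith
  linarith [hd ▸ le_refl (dotp l k)]

end GG
end MGF

lemma rateI_eq {𝒳 : Type*} [Fintype 𝒳] {d : ℕ} (P : 𝒳 → 𝒳 → ℝ)
    (q : 𝒳 → 𝒳 → Measure (Fin d → ℝ)) (hq : ∀ x y, IsProbabilityMeasure (q x y))
    (hsl : ∀ x y : 𝒳, Superlinear (q x y))
    (k : 𝒳 × 𝒳 → (Fin d → ℝ)) (θ : 𝒳 × 𝒳 → ℝ) (hθ : θ ∈ stdSimplex ℝ (𝒳 × 𝒳)) :
    rateI P q k θ =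
      if (∀ x : 𝒳, ∑ y, θ (x, y) = ∑ y, θ (y, x)) then
        (∑ p : 𝒳 × 𝒳, Gfun (q p.1 p.2) (k p) (θ p)) +
          ∑ p : 𝒳 × 𝒳, sEnt (θ p) ((∑ y, θ (p.1, y)) * P p.1 p.2)
      else ⊤ := by
  by_cases hmarg : ∀ x : 𝒳, ∑ y, θ (x, y) = ∑ y, θ (y, x)
  · rw [if_pos hmarg]
    by_cases habs : ∀ p : 𝒳 × 𝒳, θ p = 0 → k p = 0
    · rw [rateI, if_pos ⟨habs, hmarg, hθ⟩]
      congr 1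
      apply Finset.sum_congr rfl
      intro p _
      haveI := hq p.1 p.2
      rcases eq_or_lt_of_le (hθ.1 p) with h0 | hpos
      · have hk := habs p h0.symm
        rw [← h0, hk]
        rw [Gfun_zero_zero]
        norm_num
      · exact Gfun_eq (hsl p.1 p.2) hpos
    · rw [rateI, if_neg (by rintro ⟨h, -, -⟩; exact habs h)]
      push_neg at habs
      obtain ⟨p₀, hp0, hk0⟩ := habs
      haveI := hq p₀.1 p₀.2
      have h1 : ∑ p : 𝒳 × 𝒳, Gfun (q p.1 p.2) (k p) (θ p) = ⊤ := by
        apply ereal_sum_eq_top (fun i _ => by haveI := hq i.1 i.2; exact Gfun_nonneg _ _)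
          (Finset.mem_univ p₀)
        rw [hp0]
        exact Gfun_zero_of_ne hk0
      rw [h1, ereal_top_add_of_nonneg (Finset.sum_nonneg fun i _ => sEnt_nonneg _ _)]
  · rw [if_neg hmarg, rateI, if_neg (by rintro ⟨-, h, -⟩; exact hmarg h)]

set_option maxHeartbeats 1000000 in
/-- **Goodness of the rate functional `I`.** `I` is lower semicontinuous on
`(ℝ^d)^{𝒳×𝒳} × 𝒫(𝒳×𝒳)` and all of its sublevel sets `{I ≤ c}`, `c ∈ [0,∞)`, are compact. -/
theorem rateI_good {𝒳 : Type*} [Fintype 𝒳] [DecidableEq 𝒳] [Nonempty 𝒳] {d : ℕ} (hd : 1 ≤ d)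
    (P : 𝒳 → 𝒳 → ℝ) (hPnonneg : ∀ x y, 0 ≤ P x y) (hProw : ∀ x, ∑ y, P x y = 1)
    (hirr : ∀ x y : 𝒳, ∃ n : ℕ, 0 < ((Matrix.of P) ^ n) x y)
    (q : 𝒳 → 𝒳 → Measure (Fin d → ℝ)) (hq : ∀ x y, IsProbabilityMeasure (q x y))
    (hsl : ∀ x y : 𝒳, Superlinear (q x y)) :
    LowerSemicontinuous (fun kθ : (𝒳 × 𝒳 → (Fin d → ℝ)) × (stdSimplex ℝ (𝒳 × 𝒳)) =>
      rateI P q kθ.1 kθ.2.1) ∧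
    ∀ c : ℝ, 0 ≤ c →
      IsCompact {kθ : (𝒳 × 𝒳 → (Fin d → ℝ)) × (stdSimplex ℝ (𝒳 × 𝒳)) |
        rateI P q kθ.1 kθ.2.1 ≤ (c : EReal)} := by
  have heq : (fun kθ : (𝒳 × 𝒳 → (Fin d → ℝ)) × (stdSimplex ℝ (𝒳 × 𝒳)) => rateI P q kθ.1 kθ.2.1)
      = fun kθ : (𝒳 × 𝒳 → (Fin d → ℝ)) × (stdSimplex ℝ (𝒳 × 𝒳)) =>
        @ite EReal (∀ x : 𝒳, ∑ y, kθ.2.1 (x, y) = ∑ y, kθ.2.1 (y, x)) (Classical.propDecidable _)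
          ((∑ p : 𝒳 × 𝒳, Gfun (q p.1 p.2) (kθ.1 p) (kθ.2.1 p)) +
            ∑ p : 𝒳 × 𝒳, sEnt (kθ.2.1 p) ((∑ y, kθ.2.1 (p.1, y)) * P p.1 p.2))
          ⊤ := by
    funext kθ
    rw [rateI_eq P q hq hsl kθ.1 kθ.2.1 kθ.2.2]
    by_cases hcond : ∀ x : 𝒳, ∑ y, kθ.2.1 (x, y) = ∑ y, kθ.2.1 (y, x)
    · rw [if_pos hcond, if_pos hcond]
    · rw [if_neg hcond, if_neg hcond]
  have hG1 : ∀ p : 𝒳 × 𝒳, LowerSemicontinuous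
      (fun kθ : (𝒳 × 𝒳 → (Fin d → ℝ)) × (stdSimplex ℝ (𝒳 × 𝒳)) =>
        Gfun (q p.1 p.2) (kθ.1 p) (kθ.2.1 p)) := by
    intro p
    haveI := hq p.1 p.2
    have hc : Continuous (fun kθ : (𝒳 × 𝒳 → (Fin d → ℝ)) × (stdSimplex ℝ (𝒳 × 𝒳)) =>
        ((kθ.1 p, kθ.2.1 p) : (Fin d → ℝ) × ℝ)) :=
      ((continuous_apply p).comp continuous_fst).prodMk
        ((continuous_apply p).comp (continuous_subtype_val.comp continuous_snd))
    have h1 := Gfun_lsc (q := q p.1 p.2)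
    have h2 := LowerSemicontinuous.comp h1 hc
    exact h2
  have hGlsc := lsc_finset_sum (Finset.univ : Finset (𝒳 × 𝒳))
    (fun (p : 𝒳 × 𝒳) (kθ : (𝒳 × 𝒳 → (Fin d → ℝ)) × (stdSimplex ℝ (𝒳 × 𝒳))) =>
      Gfun (q p.1 p.2) (kθ.1 p) (kθ.2.1 p))
    hG1
    (fun p kθ => by haveI := hq p.1 p.2; exact Gfun_nonneg (q := q p.1 p.2) (kθ.1 p) (kθ.2.1 p))
  have hS1 : ∀ p : 𝒳 × 𝒳, LowerSemicontinuous
      (fun kθ : (𝒳 × 𝒳 → (Fin d → ℝ)) × (stdSimplex ℝ (𝒳 × 𝒳)) =>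
        sEnt (kθ.2.1 p) ((∑ y, kθ.2.1 (p.1, y)) * P p.1 p.2)) := by
    intro p
    have hc : Continuous (fun kθ : (𝒳 × 𝒳 → (Fin d → ℝ)) × (stdSimplex ℝ (𝒳 × 𝒳)) =>
        ((kθ.2.1 p, (∑ y, kθ.2.1 (p.1, y)) * P p.1 p.2) : ℝ × ℝ)) := by
      apply Continuous.prodMk
      · exact (continuous_apply p).comp (continuous_subtype_val.comp continuous_snd)
      · apply Continuous.mul _ continuous_const
        apply continuous_finset_sum
        intro y _
        exact (continuous_apply (p.1, y)).comp (continuous_subtype_val.comp continuous_snd)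
    have h1 := sEnt_lsc
    have h2 := LowerSemicontinuous.comp h1 hc
    exact h2
  have hSlsc := lsc_finset_sum (Finset.univ : Finset (𝒳 × 𝒳))
    (fun (p : 𝒳 × 𝒳) (kθ : (𝒳 × 𝒳 → (Fin d → ℝ)) × (stdSimplex ℝ (𝒳 × 𝒳))) =>
      sEnt (kθ.2.1 p) ((∑ y, kθ.2.1 (p.1, y)) * P p.1 p.2))
    hS1
    (fun p kθ => sEnt_nonneg _ _)
  have hsum : LowerSemicontinuous (fun kθ : (𝒳 × 𝒳 → (Fin d → ℝ)) × (stdSimplex ℝ (𝒳 × 𝒳)) =>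
      (∑ p : 𝒳 × 𝒳, Gfun (q p.1 p.2) (kθ.1 p) (kθ.2.1 p)) +
        ∑ p : 𝒳 × 𝒳, sEnt (kθ.2.1 p) ((∑ y, kθ.2.1 (p.1, y)) * P p.1 p.2)) := by
    apply hGlsc.add' hSlsc
    intro kθ
    apply EReal.continuousAt_add
    · right
      show (∑ p : 𝒳 × 𝒳, sEnt (kθ.2.1 p) ((∑ y, kθ.2.1 (p.1, y)) * P p.1 p.2)) ≠ ⊥
      intro hb
      have := Finset.sum_nonneg (fun (p : 𝒳 × 𝒳) (_ : p ∈ Finset.univ) =>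
        sEnt_nonneg (kθ.2.1 p) ((∑ y, kθ.2.1 (p.1, y)) * P p.1 p.2))
      rw [hb] at this
      simp at this
    · left
      show (∑ p : 𝒳 × 𝒳, Gfun (q p.1 p.2) (kθ.1 p) (kθ.2.1 p)) ≠ ⊥
      intro hb
      have := Finset.sum_nonneg (fun (p : 𝒳 × 𝒳) (_ : p ∈ Finset.univ) => by
        haveI := hq p.1 p.2
        exact Gfun_nonneg (q := q p.1 p.2) (kθ.1 p) (kθ.2.1 p))
      rw [hb] at this
      simp at this
  have hclosed : IsClosed {kθ : (𝒳 × 𝒳 → (Fin d → ℝ)) × (stdSimplex ℝ (𝒳 × 𝒳)) | ∀ x : 𝒳, ∑ y, kθ.2.1 (x, y) = ∑ y, kθ.2.1 (y, x)} := by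
    have h2 : {kθ : (𝒳 × 𝒳 → (Fin d → ℝ)) × (stdSimplex ℝ (𝒳 × 𝒳)) | ∀ x : 𝒳, ∑ y, kθ.2.1 (x, y) = ∑ y, kθ.2.1 (y, x)}
        = ⋂ x : 𝒳, {kθ : (𝒳 × 𝒳 → (Fin d → ℝ)) × (stdSimplex ℝ (𝒳 × 𝒳)) | ∑ y, kθ.2.1 (x, y) = ∑ y, kθ.2.1 (y, x)} := by
      ext kθ; simp [Set.mem_iInter]
    rw [h2]
    apply isClosed_iInter
    intro x
    apply isClosed_eq
    · apply continuous_finset_sum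
      intro y _
      exact (continuous_apply (x, y)).comp (continuous_subtype_val.comp continuous_snd)
    · apply continuous_finset_sum
      intro y _
      exact (continuous_apply (y, x)).comp (continuous_subtype_val.comp continuous_snd)
  have hlsc : LowerSemicontinuous (fun kθ : (𝒳 × 𝒳 → (Fin d → ℝ)) × (stdSimplex ℝ (𝒳 × 𝒳)) => rateI P q kθ.1 kθ.2.1) := by
    rw [heq]
    exact lsc_ite hclosed hsum
  refine ⟨hlsc, ?_⟩
  intro c hc
  have hclosed2 : IsClosed {kθ : (𝒳 × 𝒳 → (Fin d → ℝ)) × (stdSimplex ℝ (𝒳 × 𝒳)) | rateI P q kθ.1 kθ.2.1 ≤ (c : EReal)} := by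
    rw [show {kθ : (𝒳 × 𝒳 → (Fin d → ℝ)) × (stdSimplex ℝ (𝒳 × 𝒳)) | rateI P q kθ.1 kθ.2.1 ≤ (c : EReal)}
        = ((fun kθ : (𝒳 × 𝒳 → (Fin d → ℝ)) × (stdSimplex ℝ (𝒳 × 𝒳)) => rateI P q kθ.1 kθ.2.1) ⁻¹' (Set.Ioi (c : EReal)))ᶜ from by
      ext kθ; simp [not_lt]]
    exact (hlsc.isOpen_preimage _).isClosed_compl
  set R : 𝒳 × 𝒳 → ℝ := fun p => c + (logMGFAbs (q p.1 p.2) 1).toReal with hR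
  have hsub : {kθ : (𝒳 × 𝒳 → (Fin d → ℝ)) × (stdSimplex ℝ (𝒳 × 𝒳)) | rateI P q kθ.1 kθ.2.1 ≤ (c : EReal)}
      ⊆ {k : 𝒳 × 𝒳 → Fin d → ℝ | ∀ p i, k p i ∈ Set.Icc (-(R p)) (R p)} ×ˢ
        (Set.univ : Set (stdSimplex ℝ (𝒳 × 𝒳))) := by
    intro kθ hmem
    simp only [Set.mem_setOf_eq] at hmem
    rw [rateI_eq P q hq hsl kθ.1 kθ.2.1 kθ.2.2] at hmem
    by_cases hcond : ∀ x : 𝒳, ∑ y, kθ.2.1 (x, y) = ∑ y, kθ.2.1 (y, x)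
    swap
    · rw [if_neg hcond] at hmem
      exact absurd (lt_of_le_of_lt hmem (EReal.coe_lt_top c)) (lt_irrefl _)
    rw [if_pos hcond] at hmem
    constructor
    swap
    · trivial
    intro p i
    haveI := hq p.1 p.2
    set θ := kθ.2.1 with hθdef
    have hθmem := kθ.2.2
    have hGle : Gfun (q p.1 p.2) (kθ.1 p) (θ p) ≤ (c : EReal) := by
      calc Gfun (q p.1 p.2) (kθ.1 p) (θ p)
          ≤ ∑ p' : 𝒳 × 𝒳, Gfun (q p'.1 p'.2) (kθ.1 p') (θ p') :=
            Finset.single_le_sum (fun p' _ => by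
                haveI := hq p'.1 p'.2
                exact Gfun_nonneg (q := q p'.1 p'.2) (kθ.1 p') (θ p'))
              (Finset.mem_univ p)
        _ ≤ _ + ∑ p' : 𝒳 × 𝒳, sEnt (θ p') ((∑ y, θ (p'.1, y)) * P p'.1 p'.2) :=
            le_add_of_nonneg_right (Finset.sum_nonneg fun p' _ => sEnt_nonneg _ _)
        _ ≤ (c : EReal) := hmem
    have hθ0 : 0 ≤ θ p := hθmem.1 p
    have hθ1 : θ p ≤ 1 := by
      calc θ p ≤ ∑ p' : 𝒳 × 𝒳, θ p' :=
            Finset.single_le_sum (fun p' _ => hθmem.1 p') (Finset.mem_univ p)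
        _ = 1 := hθmem.2
    have hlb := Gfun_lower_bound (q := q p.1 p.2) (hsl p.1 p.2) (kθ.1 p) hθ0 hθ1
    have hl1 : l1norm (kθ.1 p) ≤ R p := by
      have := le_trans hlb hGle
      rw [EReal.coe_le_coe_iff] at this
      show l1norm (kθ.1 p) ≤ c + (logMGFAbs (q p.1 p.2) 1).toReal
      linarith
    have habs : |kθ.1 p i| ≤ R p := by
      calc |kθ.1 p i| ≤ ∑ j, |kθ.1 p j| :=
            Finset.single_le_sum (f := fun j => |kθ.1 p j|) (fun j _ => abs_nonneg _)
              (Finset.mem_univ i)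
        _ ≤ R p := hl1
    rw [Set.mem_Icc]
    constructor
    · linarith [neg_abs_le (kθ.1 p i)]
    · linarith [le_abs_self (kθ.1 p i)]
  apply IsCompact.of_isClosed_subset _ hclosed2 hsub
  apply IsCompact.prod _ isCompact_univ
  have hbox : {k : 𝒳 × 𝒳 → Fin d → ℝ | ∀ p i, k p i ∈ Set.Icc (-(R p)) (R p)}
      = Set.pi Set.univ (fun p => Set.pi Set.univ fun _ : Fin d => Set.Icc (-(R p)) (R p)) := by
    ext k
    simp only [Set.mem_setOf_eq, Set.mem_pi, Set.mem_univ, forall_true_left]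
  rw [hbox]
  exact isCompact_univ_pi fun p => isCompact_univ_pi fun _ => isCompact_Icc
end
end

section
/- (Degenerate weight limit.) Let (Ã_m)_{m≥1} be i.i.d. ℝ^d-valued random variables with common law q satisfying the superlinearity assumption, and let (θ^n) be a sequence with θ^n > 0, nθ^n ∈ ℕ for each n, and θ^n → 0. Then for every ε > 0, limsup_{n→∞} (1/n) log ℙ( |(1/n) ∑_{m=1}^{nθ^n} Ã_m|₁ ≥ ε ) = −∞. -/
open MeasureTheory ProbabilityTheory Filter
open scoped ENNReal Classical

noncomputable section

lemma l1norm_nonneg {d : ℕ} (a : Fin d → ℝ) : 0 ≤ l1norm a :=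
  Finset.sum_nonneg fun _ _ => abs_nonneg _
lemma measurable_l1norm {d : ℕ} : Measurable (l1norm (d := d)) :=
  Finset.measurable_sum _ fun i _ => (measurable_pi_apply i).abs
lemma l1norm_smul {d : ℕ} (c : ℝ) (v : Fin d → ℝ) : l1norm (c • v) = |c| * l1norm v := by
  simp [l1norm, Finset.mul_sum, abs_mul]
lemma l1norm_sum_le {d : ℕ} (s : Finset ℕ) (v : ℕ → Fin d → ℝ) :
    l1norm (∑ m ∈ s, v m) ≤ ∑ m ∈ s, l1norm (v m) := by
  unfold l1norm
  rw [Finset.sum_comm]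
  refine Finset.sum_le_sum fun i _ => ?_
  simpa using Finset.abs_sum_le_sum_abs (fun m => v m i) s
lemma ofReal_exp_sum (s : Finset ℕ) (f : ℕ → ℝ) :
    ENNReal.ofReal (Real.exp (∑ m ∈ s, f m)) = ∏ m ∈ s, ENNReal.ofReal (Real.exp (f m)) := by
  induction s using Finset.cons_induction with
  | empty => simp
  | cons a s ha ih =>
    rw [Finset.sum_cons, Finset.prod_cons, Real.exp_add,
      ENNReal.ofReal_mul (Real.exp_pos _).le, ih]

lemma mgf_abs_finite {d : ℕ} (q : Measure (Fin d → ℝ)) [IsProbabilityMeasure q]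
    (hsl : Superlinear q) (s : ℝ) :
    ∫⁻ a, ENNReal.ofReal (Real.exp (s * l1norm a)) ∂q ≠ ⊤ := by
  intro htop
  -- s must be positive
  have hspos : 0 < s := by
    by_contra hs
    push_neg at hs
    have hle : ∫⁻ a, ENNReal.ofReal (Real.exp (s * l1norm a)) ∂q ≤ 1 := by
      calc ∫⁻ a, ENNReal.ofReal (Real.exp (s * l1norm a)) ∂q
          ≤ ∫⁻ _, 1 ∂q := by
            refine lintegral_mono fun a => ?_
            have : Real.exp (s * l1norm a) ≤ 1 := by
              rw [← Real.exp_zero]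
              exact Real.exp_le_exp.mpr (mul_nonpos_of_nonpos_of_nonneg hs (l1norm_nonneg a))
            simpa using ENNReal.ofReal_le_ofReal this
        _ = 1 := by simp
    simp [htop] at hle
  -- logMGFAbs is ⊤ for t ≥ s
  have hMGFtop : ∀ t : ℝ, s ≤ t → logMGFAbs q t = ⊤ := by
    intro t ht
    have : ∫⁻ a, ENNReal.ofReal (Real.exp (s * l1norm a)) ∂q
        ≤ ∫⁻ a, ENNReal.ofReal (Real.exp (t * l1norm a)) ∂q :=
      lintegral_mono fun a => ENNReal.ofReal_le_ofReal (Real.exp_le_exp.mpr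
        (mul_le_mul_of_nonneg_right ht (l1norm_nonneg a)))
    rw [logMGFAbs, ENNReal.log_eq_top_iff]
    exact top_le_iff.mp (htop ▸ this)
  -- find M with positive mass of {l1norm ≤ M}
  obtain ⟨M, hM⟩ : ∃ M : ℕ, 0 < q {a | l1norm a ≤ (M : ℝ)} := by
    by_contra h
    push_neg at h
    have h0 : ∀ M : ℕ, q {a | l1norm a ≤ (M : ℝ)} = 0 := fun M => le_antisymm (h M) bot_le
    have : q (⋃ M : ℕ, {a | l1norm a ≤ (M : ℝ)}) = 0 := measure_iUnion_null h0
    have huniv : (⋃ M : ℕ, {a : Fin d → ℝ | l1norm a ≤ (M : ℝ)}) = Set.univ := by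
      ext a
      simp only [Set.mem_iUnion, Set.mem_setOf_eq, Set.mem_univ, iff_true]
      exact exists_nat_ge (l1norm a)
    rw [huniv] at this
    simp at this
  set B : Set (Fin d → ℝ) := {a | l1norm a ≤ (M : ℝ)} with hB
  have hBmeas : MeasurableSet B := measurable_l1norm measurableSet_Iic
  have hqB_le : q B ≤ 1 := prob_le_one
  have hqB_ne_top : q B ≠ ⊤ := (lt_of_le_of_lt hqB_le (by simp)).ne
  set k : ℝ := -Real.log (q B).toReal with hk
  have hk0 : 0 ≤ k := by
    rw [hk, neg_nonneg]
    refine Real.log_nonpos (ENNReal.toReal_nonneg) ?_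
    have := ENNReal.toReal_mono (by simp) hqB_le
    simpa using this
  -- lower bound on logMGFAbs for t < 0
  have hlow : ∀ t : ℝ, t < 0 → ((t * M - k : ℝ) : EReal) ≤ logMGFAbs q t := by
    intro t ht
    have hstep : ENNReal.ofReal (Real.exp (t * M)) * q B
        ≤ ∫⁻ a, ENNReal.ofReal (Real.exp (t * l1norm a)) ∂q := by
      calc ENNReal.ofReal (Real.exp (t * M)) * q B
          = ∫⁻ _ in B, ENNReal.ofReal (Real.exp (t * M)) ∂q := by
            rw [setLIntegral_const]
        _ ≤ ∫⁻ a in B, ENNReal.ofReal (Real.exp (t * l1norm a)) ∂q := by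
            refine setLIntegral_mono_ae ?_ (ae_of_all _ fun a ha => ?_)
            · exact (ENNReal.measurable_ofReal.comp
                (Real.measurable_exp.comp (measurable_l1norm.const_mul t))).aemeasurable
            · exact ENNReal.ofReal_le_ofReal (Real.exp_le_exp.mpr
                (mul_le_mul_of_nonpos_left ha ht.le))
        _ ≤ ∫⁻ a, ENNReal.ofReal (Real.exp (t * l1norm a)) ∂q :=
            setLIntegral_le_lintegral _ _
    have := ENNReal.log_monotone hstep
    rw [ENNReal.log_mul_add, ENNReal.log_ofReal_of_pos (Real.exp_pos _), Real.log_exp] at this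
    refine le_trans (le_of_eq ?_) this
    have hlogB : ENNReal.log (q B) = ((-k : ℝ) : EReal) := by
      rw [hk, neg_neg]
      exact ENNReal.log_pos_real' (ENNReal.toReal_pos hM.ne' hqB_ne_top)
    rw [hlogB]
    rw [show (t * M - k : ℝ) = (t * M) + (-k) by ring, EReal.coe_add]
  -- nonnegativity of logMGFAbs for t ≥ 0
  have hge0 : ∀ t : ℝ, 0 ≤ t → (0 : EReal) ≤ logMGFAbs q t := by
    intro t ht
    rw [logMGFAbs, ENNReal.zero_le_log_iff]
    calc (1 : ℝ≥0∞) = ∫⁻ _, 1 ∂q := by simp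
      _ ≤ ∫⁻ a, ENNReal.ofReal (Real.exp (t * l1norm a)) ∂q := by
          refine lintegral_mono fun a => ?_
          rw [show (1:ℝ≥0∞) = ENNReal.ofReal (Real.exp 0) by simp]
          exact ENNReal.ofReal_le_ofReal (Real.exp_le_exp.mpr
            (mul_nonneg ht (l1norm_nonneg a)))
  -- bound on cramerTransformAbs for r ≥ max M 1
  have hbound : ∀ r : ℝ, max (M:ℝ) 1 ≤ r → cramerTransformAbs q r ≤ ((r * s + k : ℝ) : EReal) := by
    intro r hr
    have hrM : (M : ℝ) ≤ r := le_trans (le_max_left _ _) hr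
    have hr1 : (1 : ℝ) ≤ r := le_trans (le_max_right _ _) hr
    have hr0 : 0 ≤ r := by linarith
    refine iSup_le fun t => ?_
    rcases lt_trichotomy t 0 with htneg | ht0 | htpos
    · -- t < 0
      calc ((r*t:ℝ):EReal) - logMGFAbs q t
          ≤ ((r*t:ℝ):EReal) - ((t * M - k : ℝ) : EReal) := by
            exact EReal.sub_le_sub le_rfl (hlow t htneg)
        _ = ((r*t - (t*M - k) : ℝ) : EReal) := by
            exact (EReal.coe_sub _ _).symm
        _ ≤ ((r * s + k : ℝ) : EReal) := by
            apply EReal.coe_le_coe_iff.mpr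
            nlinarith [mul_nonneg hr0 hspos.le]
    · subst ht0
      rw [mul_zero]
      calc ((0:ℝ):EReal) - logMGFAbs q 0 ≤ ((0:ℝ):EReal) - 0 := EReal.sub_le_sub le_rfl (hge0 0 le_rfl)
        _ ≤ ((r * s + k : ℝ) : EReal) := by
            simp only [sub_zero]
            exact EReal.coe_le_coe_iff.mpr (by nlinarith)
    · rcases lt_or_ge t s with hts | hst
      · calc ((r*t:ℝ):EReal) - logMGFAbs q t ≤ ((r*t:ℝ):EReal) - 0 :=
            EReal.sub_le_sub le_rfl (hge0 t htpos.le)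
          _ = ((r*t:ℝ):EReal) := by rw [sub_zero]
          _ ≤ ((r * s + k : ℝ) : EReal) := EReal.coe_le_coe_iff.mpr (by nlinarith)
      · rw [hMGFtop t hst, EReal.sub_top]
        exact bot_le
  -- contradiction with superlinearity
  have hliminf : liminf (fun r : ℝ => cramerTransformAbs q r / (r : EReal)) atTop
      ≤ ((s + k : ℝ) : EReal) := by
    have hev : ∀ᶠ r : ℝ in atTop,
        cramerTransformAbs q r / (r : EReal) ≤ ((s + k : ℝ) : EReal) := by
      filter_upwards [eventually_ge_atTop (max (M:ℝ) 1)] with r hr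
      have hr1 : (1:ℝ) ≤ r := le_trans (le_max_right _ _) hr
      have hr0 : (0:ℝ) < r := by linarith
      calc cramerTransformAbs q r / (r : EReal)
          ≤ ((r * s + k : ℝ) : EReal) / (r : EReal) :=
            EReal.div_le_div_right_of_nonneg (by exact_mod_cast hr0.le) (hbound r hr)
        _ = (((r * s + k)/r : ℝ) : EReal) := (EReal.coe_div _ _).symm
        _ ≤ ((s + k : ℝ) : EReal) := by
            apply EReal.coe_le_coe_iff.mpr
            rw [div_le_iff₀ hr0]
            nlinarith
    calc liminf (fun r : ℝ => cramerTransformAbs q r / (r : EReal)) atTop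
        ≤ liminf (fun _ : ℝ => ((s + k : ℝ) : EReal)) atTop := liminf_le_liminf hev
      _ = ((s + k : ℝ) : EReal) := liminf_const _
  rw [hsl] at hliminf
  exact absurd (top_le_iff.mp hliminf) (EReal.coe_ne_top _)

lemma lintegral_prod_range_of_iIndep {Ω : Type*} [MeasurableSpace Ω] (μ : Measure Ω)
    [IsProbabilityMeasure μ] (Y : ℕ → Ω → ℝ≥0∞) (hY : ∀ m, Measurable (Y m))
    (hind : iIndepFun Y μ) (c : ℕ) :
    ∫⁻ ω, ∏ m ∈ Finset.range c, Y m ω ∂μ = ∏ m ∈ Finset.range c, ∫⁻ ω, Y m ω ∂μ := by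
  induction c with
  | zero => simp
  | succ c ih =>
    have hprod : Measurable fun ω => ∏ m ∈ Finset.range c, Y m ω :=
      Finset.measurable_prod _ fun m _ => hY m
    have hi : IndepFun (∏ j ∈ Finset.range c, Y j) (Y c) μ :=
      hind.indepFun_prod_range_succ hY c
    calc ∫⁻ ω, ∏ m ∈ Finset.range (c+1), Y m ω ∂μ
        = ∫⁻ ω, (∏ m ∈ Finset.range c, Y m ω) * Y c ω ∂μ := by
          simp [Finset.prod_range_succ]
      _ = (∫⁻ ω, ∏ m ∈ Finset.range c, Y m ω ∂μ) * ∫⁻ ω, Y c ω ∂μ := by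
          refine lintegral_mul_eq_lintegral_mul_lintegral_of_indepFun'' hprod.aemeasurable
            (hY c).aemeasurable ?_
          have : (fun ω => ∏ m ∈ Finset.range c, Y m ω) = ∏ j ∈ Finset.range c, Y j := by
            ext ω; simp
          rw [this]; exact hi
      _ = ∏ m ∈ Finset.range (c+1), ∫⁻ ω, Y m ω ∂μ := by
          rw [ih, Finset.prod_range_succ]


/-- **Degenerate weight limit.** For i.i.d. `ℝ^d`-valued random variables `(Ã_m)` with common law
`q` satisfying the superlinearity assumption, and weights `θ^n > 0` with `nθ^n ∈ ℕ` and
`θ^n → 0`, for every `ε > 0` the probability `ℙ(|n⁻¹ Σ_{m=1}^{nθ^n} Ã_m|₁ ≥ ε)` decays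
superexponentially. -/
theorem degenerate_weight_limit {Ω : Type*} [MeasurableSpace Ω] (μ : Measure Ω)
    [IsProbabilityMeasure μ] {d : ℕ} (hd : 1 ≤ d) (q : Measure (Fin d → ℝ))
    [IsProbabilityMeasure q] (A : ℕ → Ω → (Fin d → ℝ)) (hmeas : ∀ m, Measurable (A m))
    (hindep : iIndepFun A μ)
    (hlaw : ∀ m, Measure.map (A m) μ = q) (hsl : Superlinear q)
    (θseq : ℕ → ℝ) (hθpos : ∀ n, 0 < θseq n) (cseq : ℕ → ℕ)
    (hc : ∀ n : ℕ, 1 ≤ n → (cseq n : ℝ) = n * θseq n)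
    (hθ0 : Filter.Tendsto θseq Filter.atTop (nhds 0)) :
    ∀ ε : ℝ, 0 < ε →
      Filter.limsup (fun n : ℕ => (((n : ℝ)⁻¹ : ℝ) : EReal) * ENNReal.log
          (μ {ω | ε ≤ l1norm ((1 / (n : ℝ)) • ∑ m ∈ Finset.range (cseq n), A m ω)}))
        Filter.atTop = ⊥ := by
  intro ε hε
  set F : ℕ → EReal := fun n : ℕ => (((n : ℝ)⁻¹ : ℝ) : EReal) * ENNReal.log
      (μ {ω | ε ≤ l1norm ((1 / (n : ℝ)) • ∑ m ∈ Finset.range (cseq n), A m ω)}) with hF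
  have key : ∀ s : ℝ, 0 ≤ s → limsup F atTop ≤ ((-(s * ε) : ℝ) : EReal) := by
    intro s hs
    set g : (Fin d → ℝ) → ℝ≥0∞ := fun a => ENNReal.ofReal (Real.exp (s * l1norm a)) with hg
    have hgmeas : Measurable g :=
      ENNReal.measurable_ofReal.comp (Real.measurable_exp.comp (measurable_l1norm.const_mul s))
    set Mgf : ℝ≥0∞ := ∫⁻ a, g a ∂q with hMgf
    have hMne : Mgf ≠ ⊤ := mgf_abs_finite q hsl s
    have hM1 : 1 ≤ Mgf := by
      calc (1 : ℝ≥0∞) = ∫⁻ _, 1 ∂q := by simp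
        _ ≤ ∫⁻ a, g a ∂q := by
            refine lintegral_mono fun a => ?_
            rw [hg, show (1:ℝ≥0∞) = ENNReal.ofReal (Real.exp 0) by simp]
            exact ENNReal.ofReal_le_ofReal (Real.exp_le_exp.mpr
              (mul_nonneg hs (l1norm_nonneg a)))
    set L : ℝ := Real.log Mgf.toReal with hLdef
    have hMtoReal : 1 ≤ Mgf.toReal := by
      have := ENNReal.toReal_mono hMne hM1
      simpa using this
    have hL0 : 0 ≤ L := Real.log_nonneg hMtoReal
    have hlogM : ENNReal.log Mgf = (L : EReal) :=
      ENNReal.log_pos_real' (by linarith)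
    set Y : ℕ → Ω → ℝ≥0∞ := fun m => g ∘ A m with hY
    have hYmeas : ∀ m, Measurable (Y m) := fun m => hgmeas.comp (hmeas m)
    have hYind : iIndepFun Y μ :=
      hindep.comp (fun _ => g) (fun _ => hgmeas)
    have hYint : ∀ m, ∫⁻ ω, Y m ω ∂μ = Mgf := by
      intro m
      rw [hMgf, ← hlaw m, lintegral_map hgmeas (hmeas m)]
      rfl
    -- pointwise bound for n ≥ 1
    have hbound : ∀ n : ℕ, 1 ≤ n → F n ≤ ((θseq n * L - s * ε : ℝ) : EReal) := by
      intro n hn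
      have hn0 : (0:ℝ) < (n:ℝ) := by exact_mod_cast hn
      set c := cseq n with hcn
      set E := {ω | ε ≤ l1norm ((1 / (n : ℝ)) • ∑ m ∈ Finset.range c, A m ω)} with hE
      set a : ℝ≥0∞ := ENNReal.ofReal (Real.exp (s * ((n:ℝ) * ε))) with ha
      have ha0 : a ≠ 0 := by
        rw [ha]; simp [(Real.exp_pos _)]
      have hat : a ≠ ⊤ := by rw [ha]; exact ENNReal.ofReal_ne_top
      have hsub : E ⊆ {ω | a ≤ ∏ m ∈ Finset.range c, Y m ω} := by
        intro ω hω
        have h1 : ε ≤ (1 / (n:ℝ)) * l1norm (∑ m ∈ Finset.range c, A m ω) := by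
          have := hω
          rw [hE, Set.mem_setOf_eq, l1norm_smul] at this
          rwa [abs_of_pos (by positivity)] at this
        have h2 : (n:ℝ) * ε ≤ l1norm (∑ m ∈ Finset.range c, A m ω) := by
          rw [one_div] at h1
          calc (n:ℝ) * ε ≤ (n:ℝ) * (((n:ℝ))⁻¹ * l1norm (∑ m ∈ Finset.range c, A m ω)) :=
              mul_le_mul_of_nonneg_left h1 hn0.le
            _ = l1norm (∑ m ∈ Finset.range c, A m ω) := by field_simp
        have h3 : s * ((n:ℝ) * ε) ≤ ∑ m ∈ Finset.range c, s * l1norm (A m ω) := by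
          rw [← Finset.mul_sum]
          exact mul_le_mul_of_nonneg_left
            (h2.trans (l1norm_sum_le _ _)) hs
        rw [Set.mem_setOf_eq, ha]
        calc ENNReal.ofReal (Real.exp (s * ((n:ℝ) * ε)))
            ≤ ENNReal.ofReal (Real.exp (∑ m ∈ Finset.range c, s * l1norm (A m ω))) :=
              ENNReal.ofReal_le_ofReal (Real.exp_le_exp.mpr h3)
          _ = ∏ m ∈ Finset.range c, ENNReal.ofReal (Real.exp (s * l1norm (A m ω))) :=
              ofReal_exp_sum _ _
          _ = ∏ m ∈ Finset.range c, Y m ω := rfl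
      have hmarkov : a * μ {ω | a ≤ ∏ m ∈ Finset.range c, Y m ω} ≤ Mgf ^ c := by
        calc a * μ {ω | a ≤ ∏ m ∈ Finset.range c, Y m ω}
            ≤ ∫⁻ ω, ∏ m ∈ Finset.range c, Y m ω ∂μ :=
              mul_meas_ge_le_lintegral₀
                (Finset.measurable_prod _ fun m _ => hYmeas m).aemeasurable a
          _ = ∏ m ∈ Finset.range c, ∫⁻ ω, Y m ω ∂μ :=
              lintegral_prod_range_of_iIndep μ Y hYmeas hYind c
          _ = Mgf ^ c := by
              rw [Finset.prod_congr rfl fun m _ => hYint m, Finset.prod_const,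
                Finset.card_range]
      have hμE : μ E ≤ Mgf ^ c / a := by
        refine le_trans (measure_mono hsub) ?_
        rw [ENNReal.le_div_iff_mul_le (Or.inl ha0) (Or.inl hat)]
        rw [mul_comm]
        exact hmarkov
      have hlogE : ENNReal.log (μ E) ≤ (((c:ℝ) * L - s * ((n:ℝ) * ε) : ℝ) : EReal) := by
        calc ENNReal.log (μ E) ≤ ENNReal.log (Mgf ^ c / a) := ENNReal.log_monotone hμE
          _ = (((c:ℝ) * L - s * ((n:ℝ) * ε) : ℝ) : EReal) := by
            rw [div_eq_mul_inv, ENNReal.log_mul_add, ENNReal.log_pow, ENNReal.log_inv,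
              hlogM, ha, ENNReal.log_ofReal_of_pos (Real.exp_pos _), Real.log_exp]
            push_cast
            rw [← EReal.coe_coe_eq_natCast, sub_eq_add_neg]
        -- done
      have hF : F n ≤ (((n:ℝ)⁻¹ : ℝ) : EReal) * (((c:ℝ) * L - s * ((n:ℝ) * ε) : ℝ) : EReal) := by
        rw [hF]
        exact mul_le_mul_of_nonneg_left hlogE (by exact_mod_cast inv_nonneg.mpr hn0.le)
      refine hF.trans (le_of_eq ?_)
      rw [← EReal.coe_mul]
      congr 1
      rw [hcn, hc n hn]
      field_simp
    -- limsup computation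
    have hev : ∀ᶠ n in atTop, F n ≤ ((θseq n * L - s * ε : ℝ) : EReal) := by
      filter_upwards [eventually_ge_atTop 1] with n hn using hbound n hn
    have htends : Tendsto (fun n => θseq n * L - s * ε) atTop (nhds (-(s * ε))) := by
      have := (hθ0.mul_const L).sub_const (s * ε)
      simpa using this
    calc limsup F atTop ≤ limsup (fun n => ((θseq n * L - s * ε : ℝ) : EReal)) atTop :=
        limsup_le_limsup hev
      _ = ((-(s * ε) : ℝ) : EReal) := (EReal.tendsto_coe.mpr htends).limsup_eq
  -- conclude limsup = ⊥
  have hall : ∀ r : ℝ, limsup F atTop ≤ (r : EReal) := by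
    intro r
    have hsnn : 0 ≤ max 0 (-r / ε) := le_max_left _ _
    refine (key _ hsnn).trans ?_
    apply EReal.coe_le_coe_iff.mpr
    have : -r / ε ≤ max 0 (-r / ε) := le_max_right _ _
    have h2 : -r ≤ max 0 (-r / ε) * ε := by
      calc -r = (-r / ε) * ε := by field_simp
        _ ≤ max 0 (-r / ε) * ε := mul_le_mul_of_nonneg_right this hε.le
    linarith
  generalize hX : limsup F atTop = X at hall
  induction X with
  | bot => rfl
  | coe y => exact absurd (EReal.coe_le_coe_iff.mp (hall (y - 1))) (by linarith)
  | top => exact absurd (hall 0) (by simp)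
end
end

section
/- (Boundary limits of the bridge generator.) Assume Q_{ab} > 0 for all a ≠ b, and define for t ∈ [0,T₀) and a,b,y ∈ 𝒳 the bridge generator Q^y_{ab}(t) := ( Q_{ab} P_{by}(T₀−t) − 1_{a=b} (Q P(T₀−t))_{by} ) / P_{ay}(T₀−t). Then for all a ≠ b: (i) lim_{t→0⁺} Q^y_{ab}(t) = Q_{ab} P_{by}(T₀) / P_{ay}(T₀); and (ii) if additionally a ≠ y and b ≠ y, then lim_{t→T₀⁻} Q^y_{ab}(t) = Q_{ab} Q_{by} / Q_{ay}. -/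
open MeasureTheory ProbabilityTheory Filter
open scoped ENNReal Classical

noncomputable section

/-- Transition semigroup `P(t) = exp(tQ)` of a generator matrix `Q`. -/
def Pmat {𝒳 : Type*} [Fintype 𝒳] [DecidableEq 𝒳] (Q : Matrix 𝒳 𝒳 ℝ) (t : ℝ) :
    Matrix 𝒳 𝒳 ℝ :=
  NormedSpace.exp (t • Q)

/-- The time-dependent generator `Q^y_{ab}(t)` of the bridge. -/
def Qbridge {𝒳 : Type*} [Fintype 𝒳] [DecidableEq 𝒳] (Q : Matrix 𝒳 𝒳 ℝ) (T₀ : ℝ)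
    (y : 𝒳) (t : ℝ) (a b : 𝒳) : ℝ :=
  (Q a b * Pmat Q (T₀ - t) b y - (if a = b then (1 : ℝ) else 0) * (Q * Pmat Q (T₀ - t)) b y) /
    Pmat Q (T₀ - t) a y

section Aux

open NormedSpace

variable {𝒳 : Type*} [Fintype 𝒳] [DecidableEq 𝒳]

theorem pmat_cont (Q : Matrix 𝒳 𝒳 ℝ) (a y : 𝒳) : Continuous fun t : ℝ => Pmat Q t a y := by
  letI : SeminormedRing (Matrix 𝒳 𝒳 ℝ) := Matrix.linftyOpSemiNormedRing
  letI : NormedRing (Matrix 𝒳 𝒳 ℝ) := Matrix.linftyOpNormedRing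
  letI : NormedAlgebra ℝ (Matrix 𝒳 𝒳 ℝ) := Matrix.linftyOpNormedAlgebra
  letI : NormedAlgebra ℚ (Matrix 𝒳 𝒳 ℝ) := Matrix.linftyOpNormedAlgebra
  have h : Continuous fun t : ℝ => NormedSpace.exp (t • Q) :=
    exp_continuous.comp (continuous_id.smul continuous_const)
  exact (continuous_apply y).comp ((continuous_apply a).comp h)

theorem pmat_deriv (Q : Matrix 𝒳 𝒳 ℝ) (a y : 𝒳) :
    HasDerivAt (fun u : ℝ => Pmat Q u a y) (Q a y) 0 := by
  letI : SeminormedRing (Matrix 𝒳 𝒳 ℝ) := Matrix.linftyOpSemiNormedRing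
  letI : NormedRing (Matrix 𝒳 𝒳 ℝ) := Matrix.linftyOpNormedRing
  letI : NormedAlgebra ℝ (Matrix 𝒳 𝒳 ℝ) := Matrix.linftyOpNormedAlgebra
  letI : NormedAlgebra ℚ (Matrix 𝒳 𝒳 ℝ) := Matrix.linftyOpNormedAlgebra
  have h1 : HasDerivAt (fun u : ℝ => NormedSpace.exp (u • Q)) Q 0 := by
    have := hasDerivAt_exp_smul_const (𝕂 := ℝ) Q 0
    simp at this
    exact this
  let lm : Matrix 𝒳 𝒳 ℝ →ₗ[ℝ] ℝ :=
    { toFun := fun M => M a y, map_add' := fun _ _ => rfl, map_smul' := fun _ _ => rfl }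
  let L : Matrix 𝒳 𝒳 ℝ →L[ℝ] ℝ := LinearMap.toContinuousLinearMap lm
  exact (L.hasFDerivAt (x := Pmat Q 0)).comp_hasDerivAt 0 h1

theorem exp_entry_ge (A : Matrix 𝒳 𝒳 ℝ) (hA : ∀ i j, 0 ≤ A i j) (n : ℕ) (a y : 𝒳) :
    (n.factorial⁻¹ : ℝ) * (A ^ n) a y ≤ NormedSpace.exp A a y := by
  letI : SeminormedRing (Matrix 𝒳 𝒳 ℝ) := Matrix.linftyOpSemiNormedRing
  letI : NormedRing (Matrix 𝒳 𝒳 ℝ) := Matrix.linftyOpNormedRing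
  letI : NormedAlgebra ℝ (Matrix 𝒳 𝒳 ℝ) := Matrix.linftyOpNormedAlgebra
  have hpow : ∀ m : ℕ, ∀ i j, 0 ≤ (A ^ m) i j := by
    intro m
    induction m with
    | zero => intro i j; simp [Matrix.one_apply]; positivity
    | succ m ih =>
      intro i j
      rw [pow_succ, Matrix.mul_apply]
      exact Finset.sum_nonneg fun k _ => mul_nonneg (ih i k) (hA k j)
  let lm : Matrix 𝒳 𝒳 ℝ →ₗ[ℝ] ℝ :=
    { toFun := fun M => M a y, map_add' := fun _ _ => rfl, map_smul' := fun _ _ => rfl }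
  let L : Matrix 𝒳 𝒳 ℝ →L[ℝ] ℝ := LinearMap.toContinuousLinearMap lm
  have hsum := expSeries_summable' (𝕂 := ℝ) A
  have hmap : NormedSpace.exp A a y = ∑' n : ℕ, (n.factorial⁻¹ : ℝ) * (A ^ n) a y := by
    rw [exp_eq_tsum ℝ]
    exact L.map_tsum hsum
  rw [hmap]
  have hsum2 : Summable fun n : ℕ => (n.factorial⁻¹ : ℝ) * (A ^ n) a y :=
    hsum.map L.toLinearMap.toAddMonoidHom L.continuous
  exact Summable.le_tsum hsum2 n fun m _ => mul_nonneg (by positivity) (hpow m a y)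

theorem pmat_pos (Q : Matrix 𝒳 𝒳 ℝ) (hQpos : ∀ a b : 𝒳, a ≠ b → 0 < Q a b)
    {t : ℝ} (ht : 0 < t) (a y : 𝒳) : 0 < Pmat Q t a y := by
  classical
  set c : ℝ := ∑ x, |Q x x| with hc
  set M : Matrix 𝒳 𝒳 ℝ := Q + c • (1 : Matrix 𝒳 𝒳 ℝ) with hM
  have hMnn : ∀ i j, 0 ≤ M i j := by
    intro i j
    by_cases hij : i = j
    · subst hij
      have h1 : |Q i i| ≤ c := Finset.single_le_sum (f := fun x => |Q x x|)
        (fun x _ => abs_nonneg _) (Finset.mem_univ i)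
      have : -Q i i ≤ c := le_trans (neg_le_abs _) h1
      simp [hM, Matrix.one_apply]
      linarith
    · simp [hM, Matrix.one_apply, hij]
      exact (hQpos i j hij).le
  have hsplit : t • Q = t • M + (-(t * c)) • (1 : Matrix 𝒳 𝒳 ℝ) := by
    rw [hM, smul_add, smul_smul, neg_smul]; abel
  have hcomm : Commute (t • M) ((-(t * c)) • (1 : Matrix 𝒳 𝒳 ℝ)) :=
    (Commute.one_right (t • M)).smul_right _
  have hexp : Pmat Q t =
      NormedSpace.exp (t • M) * NormedSpace.exp ((-(t * c)) • (1 : Matrix 𝒳 𝒳 ℝ)) := by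
    rw [Pmat, hsplit]
    exact Matrix.exp_add_of_commute _ _ hcomm
  have hscalar : NormedSpace.exp ((-(t * c)) • (1 : Matrix 𝒳 𝒳 ℝ)) =
      Real.exp (-(t * c)) • (1 : Matrix 𝒳 𝒳 ℝ) := by
    letI : SeminormedRing (Matrix 𝒳 𝒳 ℝ) := Matrix.linftyOpSemiNormedRing
    letI : NormedRing (Matrix 𝒳 𝒳 ℝ) := Matrix.linftyOpNormedRing
    letI : NormedAlgebra ℝ (Matrix 𝒳 𝒳 ℝ) := Matrix.linftyOpNormedAlgebra
    rw [← Algebra.algebraMap_eq_smul_one, ← Algebra.algebraMap_eq_smul_one,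
        Real.exp_eq_exp_ℝ]
    exact (algebraMap_exp_comm _).symm
  have hentry : Pmat Q t a y = Real.exp (-(t * c)) * NormedSpace.exp (t • M) a y := by
    rw [hexp, hscalar, Matrix.mul_smul, Matrix.mul_one, Matrix.smul_apply, smul_eq_mul]
  rw [hentry]
  have htM : ∀ i j, 0 ≤ (t • M) i j := fun i j => by
    simpa using mul_nonneg ht.le (hMnn i j)
  apply mul_pos (Real.exp_pos _)
  by_cases hay : a = y
  · subst hay
    have := exp_entry_ge (t • M) htM 0 a a
    simp [Matrix.one_apply] at this
    linarith
  · have h1 := exp_entry_ge (t • M) htM 1 a y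
    simp at h1
    have hQay : M a y = Q a y := by simp [hM, Matrix.one_apply, hay]
    have : 0 < t * M a y := by rw [hQay]; exact mul_pos ht (hQpos a y hay)
    linarith

theorem pmat_slope (Q : Matrix 𝒳 𝒳 ℝ) (a y : 𝒳) (hay : a ≠ y) :
    Filter.Tendsto (fun u : ℝ => Pmat Q u a y / u) (nhdsWithin 0 (Set.Ioi 0))
      (nhds (Q a y)) := by
  have hd := pmat_deriv Q a y
  have h0 : Pmat Q 0 a y = 0 := by
    simp [Pmat, Matrix.one_apply, hay]
  have h := hasDerivAt_iff_tendsto_slope.mp hd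
  have h2 : Filter.Tendsto (slope (fun u : ℝ => Pmat Q u a y) 0)
      (nhdsWithin 0 (Set.Ioi 0)) (nhds (Q a y)) :=
    h.mono_left (nhdsWithin_mono _ (fun x hx => ne_of_gt hx))
  refine h2.congr fun u => ?_
  simp [slope_def_field, h0]

end Aux

/-- **Boundary limits of the bridge generator.** If `Q_{ab} > 0` for all `a ≠ b`, then for `a ≠ b`:
(i) `lim_{t→0⁺} Q^y_{ab}(t) = Q_{ab} P_{by}(T₀)/P_{ay}(T₀)`; and (ii) if moreover `a ≠ y` and
`b ≠ y`, then `lim_{t→T₀⁻} Q^y_{ab}(t) = Q_{ab} Q_{by}/Q_{ay}`. -/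
theorem bridge_generator_boundary_limits {𝒳 : Type*} [Fintype 𝒳] [DecidableEq 𝒳] [Nontrivial 𝒳]
    (Q : Matrix 𝒳 𝒳 ℝ) (hQpos : ∀ a b : 𝒳, a ≠ b → 0 < Q a b) (hQrow : ∀ a, ∑ b, Q a b = 0)
    (T₀ : ℝ) (hT₀ : 0 < T₀) (a b y : 𝒳) (hab : a ≠ b) :
    Filter.Tendsto (fun t : ℝ => Qbridge Q T₀ y t a b) (nhdsWithin 0 (Set.Ioi 0))
      (nhds (Q a b * Pmat Q T₀ b y / Pmat Q T₀ a y)) ∧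
    (a ≠ y → b ≠ y →
      Filter.Tendsto (fun t : ℝ => Qbridge Q T₀ y t a b) (nhdsWithin T₀ (Set.Iio T₀))
        (nhds (Q a b * Q b y / Q a y))) := by
  constructor
  · -- part (i)
    have hu : Filter.Tendsto (fun t : ℝ => T₀ - t) (nhdsWithin 0 (Set.Ioi 0)) (nhds T₀) := by
      have h : Filter.Tendsto (fun t : ℝ => T₀ - t) (nhds 0) (nhds (T₀ - 0)) :=
        tendsto_const_nhds.sub tendsto_id
      simpa using h.mono_left nhdsWithin_le_nhds
    have hnum : Filter.Tendsto (fun t : ℝ => Q a b * Pmat Q (T₀ - t) b y)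
        (nhdsWithin 0 (Set.Ioi 0)) (nhds (Q a b * Pmat Q T₀ b y)) :=
      tendsto_const_nhds.mul (((pmat_cont Q b y).tendsto T₀).comp hu)
    have hden : Filter.Tendsto (fun t : ℝ => Pmat Q (T₀ - t) a y)
        (nhdsWithin 0 (Set.Ioi 0)) (nhds (Pmat Q T₀ a y)) :=
      ((pmat_cont Q a y).tendsto T₀).comp hu
    have := hnum.div hden (pmat_pos Q hQpos hT₀ a y).ne'
    exact this.congr fun t => by simp [Qbridge, hab]
  · -- part (ii)
    intro hay hby
    have hu : Filter.Tendsto (fun t : ℝ => T₀ - t) (nhdsWithin T₀ (Set.Iio T₀))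
        (nhdsWithin 0 (Set.Ioi 0)) := by
      rw [tendsto_nhdsWithin_iff]
      constructor
      · have h : Filter.Tendsto (fun t : ℝ => T₀ - t) (nhds T₀) (nhds (T₀ - T₀)) :=
          tendsto_const_nhds.sub tendsto_id
        simpa using h.mono_left nhdsWithin_le_nhds
      · exact eventually_mem_nhdsWithin.mono fun t ht => Set.mem_Ioi.2 (sub_pos.2 ht)
    have hg : Filter.Tendsto
        (fun u : ℝ => Q a b * ((Pmat Q u b y / u) / (Pmat Q u a y / u)))
        (nhdsWithin 0 (Set.Ioi 0)) (nhds (Q a b * (Q b y / Q a y))) :=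
      tendsto_const_nhds.mul
        ((pmat_slope Q b y hby).div (pmat_slope Q a y hay) (hQpos a y hay).ne')
    have hcomp := hg.comp hu
    rw [← mul_div_assoc] at hcomp
    refine hcomp.congr' ?_
    filter_upwards [eventually_mem_nhdsWithin] with t ht
    have hu0 : (T₀ - t : ℝ) ≠ 0 := (sub_pos.2 ht).ne'
    show Q a b * ((Pmat Q (T₀ - t) b y / (T₀ - t)) / (Pmat Q (T₀ - t) a y / (T₀ - t))) =
      Qbridge Q T₀ y t a b
    rw [div_div_div_comm, div_self hu0, div_one]
    simp [Qbridge, hab, mul_div_assoc]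
end
end

section
/- (Contraction identity between the Donsker–Varadhan–Gärtner and the flux rate functionals.) For every ρ ∈ 𝒫(𝒳): sup{ −Σ_{x∈𝒳} ρ_x (Qu)_x / u_x : u ∈ ℝ^𝒳 with u_x > 0 for all x } = inf{ Σ_{x≠y} s( j_{xy} | ρ_x Q_{xy} ) : j ∈ [0,∞)^{ {(x,y) : x≠y} } with Σ_{y≠x} (j_{xy} − j_{yx}) = 0 for all x, and j_{xy} = 0 whenever ρ_x Q_{xy} = 0 }. -/
open MeasureTheory ProbabilityTheory Filter
open scoped Topology
open scoped ENNReal Classical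

noncomputable section

namespace DVGAux

variable {𝒳 : Type*} [Fintype 𝒳] [DecidableEq 𝒳]


variable {𝒳 : Type*} [Fintype 𝒳] [DecidableEq 𝒳]

def OD (𝒳 : Type*) [Fintype 𝒳] [DecidableEq 𝒳] : Finset (𝒳 × 𝒳) :=
  Finset.univ.filter (fun p => p.1 ≠ p.2)

lemma sum_OD (f : 𝒳 × 𝒳 → ℝ) :
    ∑ p ∈ OD 𝒳, f p = ∑ x, ∑ y ∈ Finset.univ.erase x, f (x, y) := by
  rw [OD, Finset.sum_filter, Fintype.sum_prod_type]
  refine Finset.sum_congr rfl fun x _ => ?_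
  rw [Finset.sum_erase_eq_sub (Finset.mem_univ x)]
  have : ∀ y : 𝒳, (if (x, y).1 ≠ (x, y).2 then f (x, y) else 0) =
      f (x, y) - (if y = x then f (x, x) else 0) := by
    intro y; by_cases h : y = x
    · simp [h]
    · rw [if_pos (by simpa using fun hh => h hh.symm), if_neg h, sub_zero]
  rw [Finset.sum_congr rfl (fun y _ => this y), Finset.sum_sub_distrib,
    Finset.sum_ite_eq' Finset.univ x (fun _ => f (x, x))]
  simp

lemma sum_OD_swap (f : 𝒳 × 𝒳 → ℝ) :
    ∑ p ∈ OD 𝒳, f p = ∑ p ∈ OD 𝒳, f p.swap := by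
  refine Finset.sum_nbij' (fun p => p.swap) (fun p => p.swap) ?_ ?_ ?_ ?_ ?_ <;>
    simp [OD, Ne, eq_comm]

lemma pairing (j : 𝒳 × 𝒳 → ℝ) (φ : 𝒳 → ℝ) :
    ∑ p ∈ OD 𝒳, j p * (φ p.2 - φ p.1) =
      ∑ x, φ x * (∑ y ∈ Finset.univ.erase x, (j (y, x) - j (x, y))) := by
  have h1 : ∑ p ∈ OD 𝒳, j p * φ p.2 = ∑ x, φ x * ∑ y ∈ Finset.univ.erase x, j (y, x) := by
    rw [sum_OD_swap (fun p => j p * φ p.2)]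
    rw [sum_OD (fun p => j p.swap * φ p.swap.2)]
    refine Finset.sum_congr rfl fun x _ => ?_
    rw [Finset.mul_sum]
    exact Finset.sum_congr rfl fun y _ => by simp [Prod.swap]; ring
  have h2 : ∑ p ∈ OD 𝒳, j p * φ p.1 = ∑ x, φ x * ∑ y ∈ Finset.univ.erase x, j (x, y) := by
    rw [sum_OD (fun p => j p * φ p.1)]
    refine Finset.sum_congr rfl fun x _ => ?_
    rw [Finset.mul_sum]
    exact Finset.sum_congr rfl fun y _ => by ring
  calc ∑ p ∈ OD 𝒳, j p * (φ p.2 - φ p.1)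
      = ∑ p ∈ OD 𝒳, (j p * φ p.2 - j p * φ p.1) := by
        refine Finset.sum_congr rfl fun p _ => by ring
    _ = ∑ x, φ x * ∑ y ∈ Finset.univ.erase x, j (y, x)
        - ∑ x, φ x * ∑ y ∈ Finset.univ.erase x, j (x, y) := by
        rw [Finset.sum_sub_distrib, h1, h2]
    _ = _ := by
        rw [← Finset.sum_sub_distrib]
        refine Finset.sum_congr rfl fun x _ => ?_
        rw [Finset.sum_sub_distrib, mul_sub]


def sC (a b : ℝ) : ℝ := a * Real.log a - a * Real.log b - a + b

lemma sC_ge (a b c : ℝ) (ha : 0 ≤ a) (hb : 0 ≤ b) (hab : b = 0 → a = 0) :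
    a * c - b * (Real.exp c - 1) ≤ sC a b := by
  rcases eq_or_lt_of_le ha with h0 | hpos
  · rw [← h0]; simp [sC]
    nlinarith [Real.exp_pos c, hb]
  · have hbpos : 0 < b := by
      rcases eq_or_lt_of_le hb with h | h
      · exact absurd (hab h.symm) (ne_of_gt hpos)
      · exact h
    have key : Real.log (b * Real.exp c / a) ≤ b * Real.exp c / a - 1 :=
      Real.log_le_sub_one_of_pos (by positivity)
    have hlog : Real.log (b * Real.exp c / a) = Real.log b + c - Real.log a := by
      rw [Real.log_div (by positivity) (ne_of_gt hpos), Real.log_mul (ne_of_gt hbpos) (ne_of_gt (Real.exp_pos c)), Real.log_exp]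
    rw [hlog] at key
    have h2 := mul_le_mul_of_nonneg_left key (le_of_lt hpos)
    have h3 : a * (b * Real.exp c / a) = b * Real.exp c := by
      field_simp
    simp only [sC]; nlinarith [h2, h3]
  
lemma sC_nonneg (a b : ℝ) (ha : 0 ≤ a) (hb : 0 ≤ b) (hab : b = 0 → a = 0) :
    0 ≤ sC a b := by
  have := sC_ge a b 0 ha hb hab
  simpa using this

lemma sC_big (a b B1 : ℝ) (hb : 0 < b) (hbB : b ≤ B1) (ha : Real.exp 2 * B1 < a) :
    a ≤ sC a b := by
  have hB1 : 0 < B1 := lt_of_lt_of_le hb hbB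
  have hapos : 0 < a := lt_trans (by positivity) ha
  have h2 : (2 : ℝ) ≤ Real.log a - Real.log b := by
    have : Real.exp 2 * b < a := lt_of_le_of_lt (by nlinarith [Real.exp_pos (2:ℝ)]) ha
    have := Real.log_lt_log (by positivity) this
    rw [Real.log_mul (ne_of_gt (Real.exp_pos 2)) (ne_of_gt hb), Real.log_exp] at this
    linarith
  have : 2 * a ≤ a * (Real.log a - Real.log b) := by nlinarith
  simp only [sC]; nlinarith

/-- key elementary lemma for criticality of the maximizer -/
lemma crit_aux (C D δ : ℝ) (hC : 0 ≤ C) (hD : 0 ≤ D) (hδ : 0 < δ)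
    (H : ∀ t, 0 < t → t < δ → 0 ≤ C * (Real.exp t - 1) + D * (Real.exp (-t) - 1)) :
    D ≤ C := by
  by_contra h
  push_neg at h
  have key : ∀ t, 0 < t → t < δ → C * Real.exp t < D →
      False := by
    intro t ht htδ hCD
    have h1 : 0 < Real.exp t - 1 := by
      have : Real.exp 0 < Real.exp t := Real.exp_lt_exp.mpr ht
      rw [Real.exp_zero] at this; linarith
    have hfact : C * (Real.exp t - 1) + D * (Real.exp (-t) - 1)
        = (Real.exp t - 1) * Real.exp (-t) * (C * Real.exp t - D) := by
      rw [Real.exp_neg]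
      field_simp
      ring
    have := H t ht htδ
    rw [hfact] at this
    nlinarith [Real.exp_pos (-t), h1, mul_pos h1 (Real.exp_pos (-t))]
  rcases eq_or_lt_of_le hC with hC0 | hCpos
  · exact key (δ/2) (by linarith) (by linarith) (by rw [← hC0]; simpa using lt_of_le_of_lt hC h)
  · have hDC : 1 < D / C := (one_lt_div hCpos).mpr h
    set t := min (δ/2) (Real.log (D/C) / 2) with ht
    have hlogpos : 0 < Real.log (D/C) := Real.log_pos hDC
    have htpos : 0 < t := lt_min (by linarith) (by linarith)
    have htδ : t < δ := lt_of_le_of_lt (min_le_left _ _) (by linarith)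
    refine key t htpos htδ ?_
    have : Real.exp t < D / C := by
      have h1 : t < Real.log (D/C) := lt_of_le_of_lt (min_le_right _ _) (by linarith)
      calc Real.exp t < Real.exp (Real.log (D/C)) := Real.exp_lt_exp.mpr h1
        _ = D / C := Real.exp_log (by positivity)
    calc C * Real.exp t < C * (D / C) := by nlinarith
      _ = D := by field_simp


def Gfun (b : 𝒳 × 𝒳 → ℝ) (φ : 𝒳 → ℝ) : ℝ :=
  ∑ p ∈ OD 𝒳, b p * (1 - Real.exp (φ p.2 - φ p.1))

lemma sum_filter_snd (f : 𝒳 × 𝒳 → ℝ) (z : 𝒳) :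
    ∑ p ∈ (OD 𝒳).filter (fun p => p.2 = z), f p = ∑ y ∈ Finset.univ.erase z, f (y, z) := by
  refine Finset.sum_nbij' (fun p => p.1) (fun y => (y, z)) ?_ ?_ ?_ ?_ ?_
  · intro p hp
    simp only [OD, Finset.mem_filter, Finset.mem_univ, true_and] at hp
    simp [Finset.mem_erase, hp.2 ▸ hp.1]
  · intro y hy
    simp only [Finset.mem_erase, Finset.mem_univ, and_true] at hy
    simp [OD, hy]
  · intro p hp
    simp only [OD, Finset.mem_filter] at hp
    exact Prod.ext rfl hp.2.symm
  · intro y _; rfl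
  · intro p hp
    simp only [OD, Finset.mem_filter] at hp
    rw [show (p.1, z) = p from Prod.ext rfl hp.2.symm]

lemma sum_filter_fst (f : 𝒳 × 𝒳 → ℝ) (z : 𝒳) :
    ∑ p ∈ (OD 𝒳).filter (fun p => p.1 = z), f p = ∑ y ∈ Finset.univ.erase z, f (z, y) := by
  refine Finset.sum_nbij' (fun p => p.2) (fun y => (z, y)) ?_ ?_ ?_ ?_ ?_
  · intro p hp
    simp only [OD, Finset.mem_filter, Finset.mem_univ, true_and] at hp
    simp [Finset.mem_erase, Ne, eq_comm]
    exact fun h => hp.1 (hp.2.trans h)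
  · intro y hy
    simp only [Finset.mem_erase, Finset.mem_univ, and_true] at hy
    simp [OD, Ne, eq_comm]
    exact fun h => hy h.symm
  · intro p hp
    simp only [OD, Finset.mem_filter] at hp
    exact Prod.ext hp.2.symm rfl
  · intro y _; rfl
  · intro p hp
    simp only [OD, Finset.mem_filter] at hp
    rw [show (z, p.2) = p from Prod.ext hp.2.symm rfl]

lemma Gfun_update (b : 𝒳 × 𝒳 → ℝ) (φ : 𝒳 → ℝ) (z : 𝒳) (t : ℝ) :
    Gfun b (Function.update φ z (φ z + t)) = Gfun b φ
      - (Real.exp t - 1) * (∑ p ∈ (OD 𝒳).filter (fun p => p.2 = z),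
          b p * Real.exp (φ p.2 - φ p.1))
      - (Real.exp (-t) - 1) * (∑ p ∈ (OD 𝒳).filter (fun p => p.1 = z),
          b p * Real.exp (φ p.2 - φ p.1)) := by
  have key : ∀ p ∈ OD 𝒳,
      b p * (1 - Real.exp (Function.update φ z (φ z + t) p.2 - Function.update φ z (φ z + t) p.1))
      = b p * (1 - Real.exp (φ p.2 - φ p.1))
        - (if p.2 = z then (Real.exp t - 1) * (b p * Real.exp (φ p.2 - φ p.1)) else 0)
        - (if p.1 = z then (Real.exp (-t) - 1) * (b p * Real.exp (φ p.2 - φ p.1)) else 0) := by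
    intro p hp
    simp only [OD, Finset.mem_filter, Finset.mem_univ, true_and] at hp
    by_cases h2 : p.2 = z
    · subst h2
      have h1 : p.1 ≠ p.2 := hp
      rw [if_pos rfl, if_neg h1, Function.update_of_ne h1, Function.update_self,
        show φ p.2 + t - φ p.1 = (φ p.2 - φ p.1) + t by ring, Real.exp_add]
      ring
    · by_cases h1 : p.1 = z
      · subst h1
        have h2' : p.2 ≠ p.1 := fun h => hp h.symm
        rw [if_neg h2, if_pos rfl, Function.update_of_ne h2', Function.update_self,
          show φ p.2 - (φ p.1 + t) = (φ p.2 - φ p.1) + (-t) by ring, Real.exp_add]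
        ring
      · rw [if_neg h2, if_neg h1, Function.update_of_ne h2, Function.update_of_ne h1]
        ring
  rw [Gfun, Finset.sum_congr rfl key, Finset.sum_sub_distrib, Finset.sum_sub_distrib,
    ← Finset.sum_filter, ← Finset.sum_filter, ← Finset.mul_sum, ← Finset.mul_sum]
  rfl

lemma exists_flux [Nontrivial 𝒳] (b : 𝒳 × 𝒳 → ℝ) (hb : ∀ p : 𝒳 × 𝒳, p.1 ≠ p.2 → 0 ≤ b p)
    (ε : ℝ) (hε : 0 < ε) (m : ℝ) (hm : ∀ φ : 𝒳 → ℝ, Gfun b φ ≤ m) :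
    ∃ j : 𝒳 × 𝒳 → ℝ,
      (∀ p, 0 ≤ j p) ∧
      (∀ p : 𝒳 × 𝒳, p.1 ≠ p.2 → 0 < j p) ∧
      (∀ p : 𝒳 × 𝒳, p.1 = p.2 → j p = 0) ∧
      (∀ x : 𝒳, ∑ y ∈ Finset.univ.erase x, (j (x, y) - j (y, x)) = 0) ∧
      ∑ p ∈ OD 𝒳, sC (j p) (b p + ε) ≤ m + ((OD 𝒳).card : ℝ) * ε := by
  obtain ⟨x₀⟩ : Nonempty 𝒳 := inferInstance
  obtain ⟨a₁, a₂, ha12⟩ := exists_pair_ne 𝒳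
  have hODne : ((a₁, a₂) : 𝒳 × 𝒳) ∈ OD 𝒳 := by simp [OD, ha12]
  set K : ℝ := ((OD 𝒳).card : ℝ) with hK
  have hK1 : (1 : ℝ) ≤ K := by
    have h : 1 ≤ (OD 𝒳).card := Finset.card_pos.mpr ⟨_, hODne⟩
    rw [hK]
    exact_mod_cast h
  set bε : 𝒳 × 𝒳 → ℝ := fun p => b p + ε with hbεdef
  have hbε : ∀ p ∈ OD 𝒳, 0 < bε p := by
    intro p hp
    have : p.1 ≠ p.2 := by simpa [OD] using hp
    have := hb p this
    simp only [hbεdef]; linarith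
  set Bε : ℝ := ∑ p ∈ OD 𝒳, bε p with hBεdef
  have hBege : ε ≤ Bε := by
    have h1 : ∑ p ∈ OD 𝒳, ε ≤ Bε := Finset.sum_le_sum fun p hp => by
      have : p.1 ≠ p.2 := by simpa [OD] using hp
      have := hb p this
      simp only [hbεdef]; linarith
    rw [Finset.sum_const, nsmul_eq_mul] at h1
    calc ε = 1 * ε := (one_mul ε).symm
      _ ≤ ((OD 𝒳).card : ℝ) * ε := by
          apply mul_le_mul_of_nonneg_right _ hε.le
          exact hK ▸ hK1
      _ ≤ Bε := h1
  set R : ℝ := Real.log (Bε / ε) + 1 with hR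
  have hlogBε : 0 ≤ Real.log (Bε / ε) := Real.log_nonneg ((one_le_div hε).mpr hBege)
  have hR1 : 1 ≤ R := by simp only [hR]; linarith
  set Aset : Set (𝒳 → ℝ) := {φ | (∀ x, φ x ∈ Set.Icc (-R) R) ∧ φ x₀ = 0} with hAset
  have hAco : IsCompact Aset := by
    have h1 : Aset = (Set.univ.pi fun _ : 𝒳 => Set.Icc (-R) R) ∩ {φ | φ x₀ = 0} := by
      ext φ; simp [hAset, Set.mem_pi, Set.mem_Icc, Pi.le_def, forall_and]
    rw [h1]
    exact (isCompact_univ_pi fun _ => isCompact_Icc).inter_right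
      (isClosed_eq (continuous_apply x₀) continuous_const)
  have hAne : (0 : 𝒳 → ℝ) ∈ Aset := by
    refine ⟨fun x => ?_, rfl⟩
    simp only [Pi.zero_apply, Set.mem_Icc]
    constructor <;> linarith
  have hGcont : Continuous (Gfun bε) := by
    unfold Gfun
    exact continuous_finset_sum _ fun p _ =>
      continuous_const.mul (continuous_const.sub
        (Real.continuous_exp.comp ((continuous_apply p.2).sub (continuous_apply p.1))))
  obtain ⟨φ, hφA, hφmax⟩ := hAco.exists_isMaxOn ⟨0, hAne⟩ hGcont.continuousOn
  have hG0 : Gfun bε 0 = 0 := by simp [Gfun]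
  have hGφ0 : 0 ≤ Gfun bε φ := hG0 ▸ hφmax hAne
  -- strict interior bound
  have hφlt : ∀ z, |φ z| < R := by
    intro z
    by_cases hz : z = x₀
    · rw [hz, hφA.2]; simp only [abs_zero]; linarith
    · set p₀ : 𝒳 × 𝒳 := if 0 ≤ φ z then (x₀, z) else (z, x₀) with hp₀
      have hx₀z : x₀ ≠ z := fun h => hz h.symm
      have hp₀OD : p₀ ∈ OD 𝒳 := by
        by_cases h : 0 ≤ φ z <;> simp [hp₀, h, OD, hz, hx₀z]
      have hc₀ : φ p₀.2 - φ p₀.1 = |φ z| := by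
        by_cases h : 0 ≤ φ z
        · simp [hp₀, h, hφA.2, abs_of_nonneg h]
        · push_neg at h
          simp [hp₀, not_le.mpr h, hφA.2, abs_of_neg h]
      have hbound : Gfun bε φ ≤ Bε - ε * Real.exp |φ z| := by
        have hterm : ∀ p ∈ OD 𝒳, bε p * (1 - Real.exp (φ p.2 - φ p.1))
            ≤ bε p - (if p = p₀ then ε * Real.exp |φ z| else 0) := by
          intro p hp
          have h1 : 0 < bε p := hbε p hp
          by_cases h : p = p₀
          · rw [if_pos h, h, hc₀]
            have h2 : 0 < bε p₀ := hbε p₀ (h ▸ hp)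
            have h3 : b p₀ + ε ≤ bε p₀ := le_of_eq rfl
            have h4 : ε ≤ bε p₀ := by
              have := hb p₀ (by simpa [OD] using hp₀OD); simp only [hbεdef]; linarith
            nlinarith [Real.exp_pos |φ z|]
          · rw [if_neg h]
            nlinarith [Real.exp_pos (φ p.2 - φ p.1)]
        calc Gfun bε φ ≤ ∑ p ∈ OD 𝒳, (bε p - if p = p₀ then ε * Real.exp |φ z| else 0) :=
              Finset.sum_le_sum hterm
          _ = Bε - ε * Real.exp |φ z| := by
              rw [Finset.sum_sub_distrib, Finset.sum_ite_eq' (OD 𝒳) p₀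
                (fun _ => ε * Real.exp |φ z|), if_pos hp₀OD]
      have h1 : Real.exp |φ z| ≤ Bε / ε := by
        rw [le_div_iff₀ hε]; nlinarith
      have h2 : |φ z| ≤ Real.log (Bε / ε) := by
        have h3 := Real.log_le_log (Real.exp_pos _) h1
        rwa [Real.log_exp] at h3
      simp only [hR]; linarith
  -- the flux
  set jε : 𝒳 × 𝒳 → ℝ := fun p => if p.1 ≠ p.2 then bε p * Real.exp (φ p.2 - φ p.1) else 0
    with hjdef
  have hjpos : ∀ p : 𝒳 × 𝒳, p.1 ≠ p.2 → 0 < jε p := by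
    intro p hp
    have h1 : 0 < bε p := hbε p (by simp [OD, hp])
    simp only [hjdef, if_pos hp]
    positivity
  have hjnn : ∀ p, 0 ≤ jε p := by
    intro p
    by_cases hp : p.1 ≠ p.2
    · exact (hjpos p hp).le
    · push_neg at hp; simp [hjdef, hp]
  set C : 𝒳 → ℝ := fun z => ∑ p ∈ (OD 𝒳).filter (fun p => p.2 = z),
    bε p * Real.exp (φ p.2 - φ p.1) with hCdef
  set D : 𝒳 → ℝ := fun z => ∑ p ∈ (OD 𝒳).filter (fun p => p.1 = z),
    bε p * Real.exp (φ p.2 - φ p.1) with hDdef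
  have hCnn : ∀ z, 0 ≤ C z := fun z => Finset.sum_nonneg fun p hp => by
    have := hbε p (Finset.mem_of_mem_filter p hp)
    positivity
  have hDnn : ∀ z, 0 ≤ D z := fun z => Finset.sum_nonneg fun p hp => by
    have := hbε p (Finset.mem_of_mem_filter p hp)
    positivity
  have hCDne : ∀ z, z ≠ x₀ → C z = D z := by
    intro z hz
    have hδ : 0 < R - |φ z| := sub_pos.mpr (hφlt z)
    have Hineq : ∀ t : ℝ, |t| < R - |φ z| →
        0 ≤ (Real.exp t - 1) * C z + (Real.exp (-t) - 1) * D z := by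
      intro t ht
      have hmem : Function.update φ z (φ z + t) ∈ Aset := by
        constructor
        · intro x
          by_cases hx : x = z
          · subst hx
            rw [Function.update_self]
            have h1 : |φ x + t| ≤ |φ x| + |t| := abs_add_le _ _
            have h2 : |φ x + t| < R := by linarith
            exact Set.mem_Icc.mpr (abs_le.mp h2.le)
          · rw [Function.update_of_ne hx]
            exact hφA.1 x
        · rw [Function.update_of_ne (fun h => hz h.symm : x₀ ≠ z)]
          exact hφA.2
      have h1 : Gfun bε (Function.update φ z (φ z + t)) ≤ Gfun bε φ := hφmax hmem
      rw [Gfun_update bε φ z t] at h1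
      linarith
    have h1 : D z ≤ C z := by
      refine crit_aux (C z) (D z) (R - |φ z|) (hCnn z) (hDnn z) hδ fun t ht1 ht2 => ?_
      have := Hineq t (abs_lt.mpr ⟨by linarith, ht2⟩)
      linarith [this]
    have h2 : C z ≤ D z := by
      refine crit_aux (D z) (C z) (R - |φ z|) (hDnn z) (hCnn z) hδ fun t ht1 ht2 => ?_
      have := Hineq (-t) (by rwa [abs_neg, abs_of_pos ht1])
      rw [neg_neg] at this
      linarith [this]
    linarith
  have hsumCD : ∑ z, C z = ∑ z, D z := by
    have h1 : ∑ z, C z = ∑ p ∈ OD 𝒳, bε p * Real.exp (φ p.2 - φ p.1) :=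
      Finset.sum_fiberwise_of_maps_to (fun p _ => Finset.mem_univ p.2) _
    have h2 : ∑ z, D z = ∑ p ∈ OD 𝒳, bε p * Real.exp (φ p.2 - φ p.1) :=
      Finset.sum_fiberwise_of_maps_to (fun p _ => Finset.mem_univ p.1) _
    rw [h1, h2]
  have hCD : ∀ z, C z = D z := by
    intro z
    by_cases hz : z = x₀
    · subst hz
      have h1 : ∑ w, (C w - D w) = 0 := by
        rw [Finset.sum_sub_distrib, hsumCD, sub_self]
      have h2 : ∀ w ∈ Finset.univ.erase z, C w - D w = 0 := by
        intro w hw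
        have := hCDne w (Finset.mem_erase.mp hw).1
        linarith
      have h3 := Finset.sum_erase_eq_sub (f := fun w => C w - D w) (Finset.mem_univ z)
      rw [Finset.sum_eq_zero h2, h1] at h3
      simp only [zero_sub] at h3
      have h4 : C z - D z = 0 := by
        have h5 := h3.symm
        simp only [neg_eq_zero] at h5 ⊢
        exact h5
      linarith
    · exact hCDne z hz
  have hCj : ∀ z, C z = ∑ y ∈ Finset.univ.erase z, jε (y, z) := by
    intro z
    rw [hCdef]
    rw [← sum_filter_snd (fun p => jε p) z]
    refine Finset.sum_congr rfl fun p hp => ?_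
    have hp' : p.1 ≠ p.2 := by
      have := Finset.mem_of_mem_filter p hp
      simpa [OD] using this
    simp [hjdef, hp']
  have hDj : ∀ z, D z = ∑ y ∈ Finset.univ.erase z, jε (z, y) := by
    intro z
    rw [hDdef]
    rw [← sum_filter_fst (fun p => jε p) z]
    refine Finset.sum_congr rfl fun p hp => ?_
    have hp' : p.1 ≠ p.2 := by
      have := Finset.mem_of_mem_filter p hp
      simpa [OD] using this
    simp [hjdef, hp']
  have hdiv : ∀ x : 𝒳, ∑ y ∈ Finset.univ.erase x, (jε (x, y) - jε (y, x)) = 0 := by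
    intro x
    rw [Finset.sum_sub_distrib, ← hDj, ← hCj, hCD x, sub_self]
  -- the value identity
  have hval : ∑ p ∈ OD 𝒳, sC (jε p) (bε p)
      = Gfun bε φ + ∑ p ∈ OD 𝒳, jε p * (φ p.2 - φ p.1) := by
    rw [Gfun, ← Finset.sum_add_distrib]
    refine Finset.sum_congr rfl fun p hp => ?_
    have hp' : p.1 ≠ p.2 := by simpa [OD] using hp
    have hbp : 0 < bε p := hbε p hp
    simp only [hjdef, if_pos hp', sC]
    rw [Real.log_mul (ne_of_gt hbp) (ne_of_gt (Real.exp_pos _)), Real.log_exp]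
    ring
  have hzero : ∑ p ∈ OD 𝒳, jε p * (φ p.2 - φ p.1) = 0 := by
    rw [pairing]
    refine Finset.sum_eq_zero fun x _ => ?_
    have h1 : ∑ y ∈ Finset.univ.erase x, (jε (y, x) - jε (x, y)) = 0 := by
      have h2 := hdiv x
      have h3 : ∑ y ∈ Finset.univ.erase x, (jε (y, x) - jε (x, y))
          = - ∑ y ∈ Finset.univ.erase x, (jε (x, y) - jε (y, x)) := by
        rw [← Finset.sum_neg_distrib]
        exact Finset.sum_congr rfl fun y _ => by ring
      rw [h3, h2, neg_zero]
    rw [h1, mul_zero]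
  have hGbound : Gfun bε φ ≤ m + K * ε := by
    have h1 : Gfun bε φ = Gfun b φ + ε * ∑ p ∈ OD 𝒳, (1 - Real.exp (φ p.2 - φ p.1)) := by
      simp only [Gfun, Finset.mul_sum, ← Finset.sum_add_distrib]
      exact Finset.sum_congr rfl fun p _ => by simp only [hbεdef]; ring
    have h2 : ∑ p ∈ OD 𝒳, (1 - Real.exp (φ p.2 - φ p.1)) ≤ K := by
      calc ∑ p ∈ OD 𝒳, (1 - Real.exp (φ p.2 - φ p.1)) ≤ ∑ _p ∈ OD 𝒳, (1 : ℝ) :=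
            Finset.sum_le_sum fun p _ => by linarith [Real.exp_pos (φ p.2 - φ p.1)]
        _ = K := by simp [hK]
    calc Gfun bε φ = Gfun b φ + ε * ∑ p ∈ OD 𝒳, (1 - Real.exp (φ p.2 - φ p.1)) := h1
      _ ≤ m + ε * K := add_le_add (hm φ) (mul_le_mul_of_nonneg_left h2 hε.le)
      _ = m + K * ε := by ring
  refine ⟨jε, hjnn, hjpos, fun p hp => by simp [hjdef, hp], hdiv, ?_⟩
  calc ∑ p ∈ OD 𝒳, sC (jε p) (b p + ε) = Gfun bε φ + 0 := by rw [← hzero, ← hval]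
    _ ≤ m + K * ε := by rw [add_zero]; exact hGbound

lemma ereal_coe_sum {α : Type*} (s : Finset α) (f : α → ℝ) :
    ((∑ x ∈ s, f x : ℝ) : EReal) = ∑ x ∈ s, ((f x : ℝ) : EReal) :=
  map_sum (⟨⟨(fun x : ℝ => (x : EReal)), EReal.coe_zero⟩, EReal.coe_add⟩ : ℝ →+ EReal) f s

lemma mul_log_ge (a : ℝ) (ha : 0 < a) : a - 1 ≤ a * Real.log a := by
  have h1 : Real.log a⁻¹ ≤ a⁻¹ - 1 := Real.log_le_sub_one_of_pos (by positivity)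
  rw [Real.log_inv] at h1
  have h2 := mul_le_mul_of_nonneg_left h1 ha.le
  have h3 : a * a⁻¹ = 1 := mul_inv_cancel₀ (ne_of_gt ha)
  nlinarith

lemma sEnt_eq_sC (a b : ℝ) (ha : 0 ≤ a) (hb : 0 ≤ b) (hab : b = 0 → a = 0) :
    sEnt a b = ((sC a b : ℝ) : EReal) := by
  rcases eq_or_lt_of_le ha with h0 | hpos
  · rw [← h0, sEnt]
    rw [if_neg (by simp), if_pos ⟨rfl, hb⟩]
    norm_num [sC]
  · have hbpos : 0 < b := by
      rcases eq_or_lt_of_le hb with h | h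
      · exact absurd (hab h.symm) (ne_of_gt hpos)
      · exact h
    have heq : a * Real.log (a / b) - a + b = sC a b := by
      rw [Real.log_div (ne_of_gt hpos) (ne_of_gt hbpos)]
      simp only [sC]; ring
    rw [sEnt, if_pos ⟨hpos, hbpos⟩, heq]

lemma pairing_zero (j : 𝒳 × 𝒳 → ℝ)
    (hdiv : ∀ x : 𝒳, ∑ y ∈ Finset.univ.erase x, (j (x, y) - j (y, x)) = 0) (φ : 𝒳 → ℝ) :
    ∑ p ∈ OD 𝒳, j p * (φ p.2 - φ p.1) = 0 := by
  rw [pairing]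
  refine Finset.sum_eq_zero fun x _ => ?_
  have h3 : ∑ y ∈ Finset.univ.erase x, (j (y, x) - j (x, y))
      = - ∑ y ∈ Finset.univ.erase x, (j (x, y) - j (y, x)) := by
    rw [← Finset.sum_neg_distrib]
    exact Finset.sum_congr rfl fun y _ => by ring
  rw [h3, hdiv x, neg_zero, mul_zero]

lemma Gfun_le (b : 𝒳 × 𝒳 → ℝ) (hb : ∀ p : 𝒳 × 𝒳, p.1 ≠ p.2 → 0 ≤ b p) (φ : 𝒳 → ℝ) :
    Gfun b φ ≤ ∑ p ∈ OD 𝒳, b p := by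
  refine Finset.sum_le_sum fun p hp => ?_
  have h1 : 0 ≤ b p := hb p (by simpa [OD] using hp)
  nlinarith [Real.exp_pos (φ p.2 - φ p.1)]

lemma weak_core (b : 𝒳 × 𝒳 → ℝ) (hb : ∀ p : 𝒳 × 𝒳, p.1 ≠ p.2 → 0 ≤ b p)
    (j : 𝒳 × 𝒳 → ℝ) (hjnn : ∀ p, 0 ≤ j p)
    (hdiv : ∀ x : 𝒳, ∑ y ∈ Finset.univ.erase x, (j (x, y) - j (y, x)) = 0)
    (hac : ∀ p : 𝒳 × 𝒳, p.1 ≠ p.2 → b p = 0 → j p = 0) (φ : 𝒳 → ℝ) :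
    Gfun b φ ≤ ∑ p ∈ OD 𝒳, sC (j p) (b p) := by
  have hz := pairing_zero j hdiv φ
  have h2 : ∑ p ∈ OD 𝒳, (j p * (φ p.2 - φ p.1)
      - b p * (Real.exp (φ p.2 - φ p.1) - 1)) = Gfun b φ := by
    rw [Finset.sum_sub_distrib, hz, zero_sub, Gfun, ← Finset.sum_neg_distrib]
    exact Finset.sum_congr rfl fun p _ => by ring
  rw [← h2]
  refine Finset.sum_le_sum fun p hp => ?_
  have hp' : p.1 ≠ p.2 := by simpa [OD] using hp
  exact sC_ge (j p) (b p) _ (hjnn p) (hb p hp') (hac p hp')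

lemma F_eq_G (Q : Matrix 𝒳 𝒳 ℝ) (hQrow : ∀ x, ∑ y, Q x y = 0) (ρ u : 𝒳 → ℝ)
    (hu : ∀ x, 0 < u x) :
    (- ∑ x, ρ x * (∑ y, Q x y * u y) / u x)
      = Gfun (fun p => ρ p.1 * Q p.1 p.2) (fun x => Real.log (u x)) := by
  rw [Gfun, sum_OD, ← Finset.sum_neg_distrib]
  refine Finset.sum_congr rfl fun x _ => ?_
  have hux : (u x) ≠ 0 := ne_of_gt (hu x)
  have e1 : ∑ y ∈ Finset.univ.erase x, Q x y = - Q x x := by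
    rw [Finset.sum_erase_eq_sub (Finset.mem_univ x), hQrow x, zero_sub]
  have e2 : ∑ y ∈ Finset.univ.erase x, Q x y * u y = (∑ y, Q x y * u y) - Q x x * u x :=
    Finset.sum_erase_eq_sub (Finset.mem_univ x)
  have e4 : ∀ y : 𝒳, ρ (x, y).1 * Q (x, y).1 (x, y).2 *
      (1 - Real.exp (Real.log (u (x, y).2) - Real.log (u (x, y).1)))
      = ρ x * Q x y - (ρ x / u x) * (Q x y * u y) := by
    intro y
    have hst : Real.exp (Real.log (u y) - Real.log (u x)) = u y / u x := by
      rw [Real.exp_sub, Real.exp_log (hu y), Real.exp_log (hu x)]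
    show ρ x * Q x y * (1 - Real.exp (Real.log (u y) - Real.log (u x))) = _
    rw [hst]
    field_simp
  rw [Finset.sum_congr rfl fun y _ => e4 y, Finset.sum_sub_distrib, ← Finset.mul_sum,
    ← Finset.mul_sum, e1, e2]
  field_simp
  ring

end DVGAux

open DVGAux

/-- **Contraction identity between the Donsker–Varadhan–Gärtner and the flux rate functionals.**
For every probability vector `ρ` on `𝒳`, the Donsker–Varadhan–Gärtner supremum over positive
test vectors `u` equals the infimum over divergence-free, absolutely continuous nonnegative
fluxes `j` of `Σ_{x≠y} s(j_{xy} | ρ_x Q_{xy})`. -/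
theorem dvg_flux_contraction {𝒳 : Type*} [Fintype 𝒳] [DecidableEq 𝒳] [Nontrivial 𝒳]
    (Q : Matrix 𝒳 𝒳 ℝ) (hQoff : ∀ x y, x ≠ y → 0 ≤ Q x y) (hQrow : ∀ x, ∑ y, Q x y = 0)
    (hirr : ∀ x y : 𝒳, ∃ (k : ℕ) (z : ℕ → 𝒳), z 0 = x ∧ z k = y ∧
      ∀ i < k, 0 < Q (z i) (z (i + 1)))
    (ρ : 𝒳 → ℝ) (hρ : ρ ∈ stdSimplex ℝ 𝒳) :
    (⨆ u ∈ {u : 𝒳 → ℝ | ∀ x, 0 < u x},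
        ((- ∑ x, ρ x * (∑ y, Q x y * u y) / u x : ℝ) : EReal)) =
      ⨅ j ∈ {j : 𝒳 × 𝒳 → ℝ | (∀ p, 0 ≤ j p) ∧
          (∀ x, ∑ y ∈ Finset.univ.erase x, (j (x, y) - j (y, x)) = 0) ∧
          (∀ x y, x ≠ y → ρ x * Q x y = 0 → j (x, y) = 0)},
        ∑ p ∈ Finset.univ.filter (fun p : 𝒳 × 𝒳 => p.1 ≠ p.2),
          sEnt (j p) (ρ p.1 * Q p.1 p.2) := by
  classical
  have hρnn : ∀ x, 0 ≤ ρ x := hρ.1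
  set bb : 𝒳 × 𝒳 → ℝ := fun p => ρ p.1 * Q p.1 p.2 with hbb
  have hbnn : ∀ p : 𝒳 × 𝒳, p.1 ≠ p.2 → 0 ≤ bb p := fun p hp =>
    mul_nonneg (hρnn p.1) (hQoff _ _ hp)
  refine le_antisymm (iSup₂_le fun u hu => le_iInf₂ fun j hj => ?_) ?_
  · obtain ⟨hjnn, hjdiv, hjac⟩ := hj
    have hu' : ∀ x, 0 < u x := hu
    have hac : ∀ p : 𝒳 × 𝒳, p.1 ≠ p.2 → bb p = 0 → j p = 0 := fun p hp h0 => by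
      have := hjac p.1 p.2 hp h0; simpa using this
    have hW := weak_core bb hbnn j hjnn hjdiv hac (fun x => Real.log (u x))
    have hFG := F_eq_G Q hQrow ρ u hu'
    calc ((- ∑ x, ρ x * (∑ y, Q x y * u y) / u x : ℝ) : EReal)
        = ((Gfun bb (fun x => Real.log (u x)) : ℝ) : EReal) := by rw [hFG]
      _ ≤ ((∑ p ∈ OD 𝒳, sC (j p) (bb p) : ℝ) : EReal) := EReal.coe_le_coe_iff.mpr hW
      _ = ∑ p ∈ OD 𝒳, sEnt (j p) (bb p) := by
          rw [ereal_coe_sum]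
          exact Finset.sum_congr rfl fun p hp =>
            (sEnt_eq_sC _ _ (hjnn p) (hbnn p (by simpa [OD] using hp))
              (hac p (by simpa [OD] using hp))).symm
      _ = ∑ p ∈ Finset.univ.filter (fun p : 𝒳 × 𝒳 => p.1 ≠ p.2),
            sEnt (j p) (ρ p.1 * Q p.1 p.2) := rfl
  · set SUP := (⨆ u ∈ {u : 𝒳 → ℝ | ∀ x, 0 < u x},
        ((- ∑ x, ρ x * (∑ y, Q x y * u y) / u x : ℝ) : EReal)) with hSUP
    have hSup0 : (0 : EReal) ≤ SUP := by
      rw [hSUP]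
      refine le_iSup₂_of_le (fun _ => (1 : ℝ)) (fun x => one_pos) ?_
      have h : (- ∑ x, ρ x * (∑ y, Q x y * (1:ℝ)) / (1:ℝ)) = (0:ℝ) := by
        simp [hQrow]
      rw [h]
      simp
    have hSupB : SUP ≤ ((∑ p ∈ OD 𝒳, bb p : ℝ) : EReal) := by
      rw [hSUP]
      refine iSup₂_le fun u hu => ?_
      rw [F_eq_G Q hQrow ρ u hu]
      exact EReal.coe_le_coe_iff.mpr (Gfun_le bb hbnn _)
    have hne_top : SUP ≠ ⊤ := ne_top_of_le_ne_top (EReal.coe_ne_top _) hSupB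
    have hne_bot : SUP ≠ ⊥ := fun h => by
      rw [h] at hSup0
      exact absurd hSup0 (by simp)
    set m : ℝ := SUP.toReal with hmdef
    have hmS : (m : EReal) = SUP := EReal.coe_toReal hne_top hne_bot
    have hGm : ∀ φ : 𝒳 → ℝ, Gfun bb φ ≤ m := by
      intro φ
      have h1 : ((Gfun bb φ : ℝ) : EReal) ≤ SUP := by
        rw [hSUP]
        refine le_iSup₂_of_le (fun x => Real.exp (φ x)) (fun x => Real.exp_pos _) ?_
        have h2 := F_eq_G Q hQrow ρ (fun x => Real.exp (φ x)) (fun x => Real.exp_pos _)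
        rw [h2]
        have h3 : (fun x => Real.log (Real.exp (φ x))) = φ := funext fun x => Real.log_exp _
        rw [h3]
      rw [← hmS] at h1
      exact EReal.coe_le_coe_iff.mp h1
    have hm0 : 0 ≤ m := by
      have h1 := hSup0
      rw [← hmS] at h1
      exact_mod_cast h1
    set K : ℝ := ((OD 𝒳).card : ℝ) with hKdef
    have hK0 : 0 ≤ K := by rw [hKdef]; positivity
    set Bb : ℝ := ∑ p ∈ OD 𝒳, bb p with hBbdef
    have hBb0 : 0 ≤ Bb := Finset.sum_nonneg fun p hp => hbnn p (by simpa [OD] using hp)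
    have hbB : ∀ p ∈ OD 𝒳, bb p ≤ Bb := fun p hp =>
      Finset.single_le_sum (fun q hq => hbnn q (by simpa [OD] using hq)) hp
    set εf : ℕ → ℝ := fun n => 1 / ((n : ℝ) + 1) with hεf
    have hεpos : ∀ n, 0 < εf n := fun n => by rw [hεf]; positivity
    have hεle1 : ∀ n, εf n ≤ 1 := fun n => by
      rw [hεf]
      rw [div_le_one (by positivity)]
      linarith [Nat.cast_nonneg (α := ℝ) n]
    choose J hJ1 hJ2 hJD hJ3 hJ4 using fun n => exists_flux bb hbnn (εf n) (hεpos n) m hGm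
    set CB : ℝ := Real.exp 2 * (Bb + 1) + (m + K) + 1 with hCB
    have hCBpos : 0 < CB := by nlinarith [Real.exp_pos (2:ℝ)]
    have hsum_le : ∀ n, ∑ p ∈ OD 𝒳, sC (J n p) (bb p + εf n) ≤ m + K := fun n =>
      le_trans (hJ4 n) (by nlinarith [hεle1 n, hεpos n])
    have hterm_nonneg : ∀ n, ∀ p ∈ OD 𝒳, 0 ≤ sC (J n p) (bb p + εf n) := by
      intro n p hp
      have hb1 := hbnn p (by simpa [OD] using hp)
      refine sC_nonneg _ _ (hJ1 n p) (by linarith [hεpos n]) ?_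
      intro h; exfalso; linarith [hεpos n]
    have hterm_le : ∀ n, ∀ p ∈ OD 𝒳, sC (J n p) (bb p + εf n) ≤ m + K := fun n p hp =>
      le_trans (Finset.single_le_sum (hterm_nonneg n) hp) (hsum_le n)
    have hJCB : ∀ n, ∀ p, J n p ≤ CB := by
      intro n p
      by_cases hp : p.1 ≠ p.2
      · have hpOD : p ∈ OD 𝒳 := by simp [OD, hp]
        by_contra hgt
        push_neg at hgt
        have h1 : Real.exp 2 * (Bb + 1) < J n p := by nlinarith
        have h2 : 0 < bb p + εf n := by
          have := hbnn p hp; linarith [hεpos n]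
        have h3 : bb p + εf n ≤ Bb + 1 := by
          have := hbB p hpOD; linarith [hεle1 n]
        have h4 := sC_big (J n p) (bb p + εf n) (Bb + 1) h2 h3 h1
        have h5 := hterm_le n p hpOD
        nlinarith [mul_pos (Real.exp_pos (2:ℝ)) (by linarith : (0:ℝ) < Bb + 1)]
      · push_neg at hp
        rw [hJD n p hp]
        exact hCBpos.le
    have hmemIcc : ∀ n, J n ∈ Set.Icc (0 : 𝒳 × 𝒳 → ℝ) (fun _ => CB) :=
      fun n => ⟨fun p => hJ1 n p, fun p => hJCB n p⟩
    obtain ⟨j, hjmem, σ, hσ, htend⟩ := isCompact_Icc.tendsto_subseq hmemIcc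
    have htendp : ∀ p, Tendsto (fun k => J (σ k) p) atTop (𝓝 (j p)) := by
      intro p
      have h := tendsto_pi_nhds.mp htend p
      simpa [Function.comp] using h
    have hεσ : Tendsto (fun k => εf (σ k)) atTop (𝓝 0) := by
      have h1 : Tendsto εf atTop (𝓝 0) := by
        rw [hεf]; exact tendsto_one_div_add_atTop_nhds_zero_nat
      exact h1.comp hσ.tendsto_atTop
    have hjnn : ∀ p, 0 ≤ j p := fun p => hjmem.1 p
    have hjdiv : ∀ x : 𝒳, ∑ y ∈ Finset.univ.erase x, (j (x, y) - j (y, x)) = 0 := by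
      intro x
      have h1 : Tendsto (fun k => ∑ y ∈ Finset.univ.erase x,
          (J (σ k) (x, y) - J (σ k) (y, x))) atTop
          (𝓝 (∑ y ∈ Finset.univ.erase x, (j (x, y) - j (y, x)))) :=
        tendsto_finset_sum _ fun y _ => (htendp (x, y)).sub (htendp (y, x))
      have h2 : (fun k => ∑ y ∈ Finset.univ.erase x, (J (σ k) (x, y) - J (σ k) (y, x)))
          = fun _ => (0 : ℝ) := funext fun k => hJ3 (σ k) x
      rw [h2] at h1
      exact tendsto_nhds_unique h1 tendsto_const_nhds
    have hjac : ∀ p : 𝒳 × 𝒳, p.1 ≠ p.2 → bb p = 0 → j p = 0 := by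
      intro p hp hbp
      by_contra hne
      have hδ : 0 < j p := lt_of_le_of_ne (hjnn p) (Ne.symm hne)
      have hev : ∀ᶠ k in atTop, j p / 2 < J (σ k) p :=
        (htendp p).eventually (eventually_gt_nhds (by linarith))
      obtain ⟨k₀, hk₀⟩ := exists_nat_gt (Real.exp (2 * (m + K + 1) / (j p)))
      obtain ⟨N, hN⟩ := eventually_atTop.mp hev
      set k := max N k₀ with hk
      have hk1 : j p / 2 < J (σ k) p := hN k (le_max_left _ _)
      have hkk : Real.exp (2 * (m + K + 1) / (j p)) < (σ k : ℝ) + 1 := by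
        have h1 : (k₀ : ℝ) ≤ (σ k : ℝ) := by
          have h2 : k₀ ≤ k := le_max_right _ _
          have h3 : k ≤ σ k := hσ.le_apply
          exact_mod_cast le_trans h2 h3
        linarith
      have hlog : 2 * (m + K + 1) / (j p) < Real.log ((σ k : ℝ) + 1) :=
        (Real.lt_log_iff_exp_lt (by positivity)).mpr hkk
      have hT : 0 < 2 * (m + K + 1) / (j p) := div_pos (by linarith) hδ
      have hlogpos : 0 < Real.log ((σ k : ℝ) + 1) := hT.trans hlog
      have hbnd : sC (J (σ k) p) (bb p + εf (σ k)) ≤ m + K :=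
        hterm_le (σ k) p (by simp [OD, hp])
      rw [hbp, zero_add] at hbnd
      have hapos : 0 < J (σ k) p := lt_of_le_of_lt (by positivity) hk1
      have hloga : J (σ k) p - 1 ≤ J (σ k) p * Real.log (J (σ k) p) :=
        mul_log_ge _ hapos
      have hlogε : Real.log (εf (σ k)) = - Real.log ((σ k : ℝ) + 1) := by
        rw [hεf]
        simp only [one_div]
        rw [Real.log_inv]
      have hε0 : 0 < εf (σ k) := hεpos (σ k)
      have hlow : J (σ k) p * Real.log ((σ k : ℝ) + 1) - 1 ≤ sC (J (σ k) p) (εf (σ k)) := by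
        simp only [sC]
        rw [hlogε]
        nlinarith
      have h6 : (j p / 2) * Real.log ((σ k : ℝ) + 1)
          ≤ J (σ k) p * Real.log ((σ k : ℝ) + 1) :=
        mul_le_mul_of_nonneg_right hk1.le hlogpos.le
      have h7 : m + K + 1 < (j p / 2) * Real.log ((σ k : ℝ) + 1) := by
        have h8 := mul_lt_mul_of_pos_left hlog (by linarith : (0:ℝ) < j p / 2)
        calc m + K + 1 = (j p / 2) * (2 * (m + K + 1) / (j p)) := by
              field_simp
          _ < _ := h8
      linarith
    set Epos := (OD 𝒳).filter (fun p => 0 < bb p) with hEpos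
    have hA : Tendsto (fun k => ∑ p ∈ Epos, sC (J (σ k) p) (bb p + εf (σ k))) atTop
        (𝓝 (∑ p ∈ Epos, sC (j p) (bb p))) := by
      refine tendsto_finset_sum _ fun p hp => ?_
      have hbp : 0 < bb p := (Finset.mem_filter.mp hp).2
      have htb : Tendsto (fun k => bb p + εf (σ k)) atTop (𝓝 (bb p)) := by
        have h1 : Tendsto (fun k => bb p + εf (σ k)) atTop (𝓝 (bb p + 0)) :=
          tendsto_const_nhds.add hεσ
        simpa using h1
      have hcont : ContinuousAt
          (fun q : ℝ × ℝ => q.1 * Real.log q.1 - q.1 * Real.log q.2 - q.1 + q.2)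
          (j p, bb p) := by
        have h1 : ContinuousAt (fun q : ℝ × ℝ => q.1 * Real.log q.1) (j p, bb p) :=
          (Real.continuous_mul_log.comp continuous_fst).continuousAt
        have h2 : ContinuousAt (fun q : ℝ × ℝ => q.1 * Real.log q.2) (j p, bb p) := by
          have hsnd : ContinuousAt (Prod.snd : ℝ × ℝ → ℝ) (j p, bb p) := continuousAt_snd
          have hlog : ContinuousAt Real.log (bb p) := Real.continuousAt_log hbp.ne'
          exact continuousAt_fst.mul
            (ContinuousAt.comp (f := (Prod.snd : ℝ × ℝ → ℝ)) (x := (j p, bb p)) hlog hsnd)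
        exact ((h1.sub h2).sub continuousAt_fst).add continuousAt_snd
      have h3 := hcont.tendsto.comp ((htendp p).prodMk_nhds htb)
      simpa [sC, Function.comp_def] using h3
    have hTm : Tendsto (fun k => m + K * εf (σ k)) atTop (𝓝 m) := by
      have h1 : Tendsto (fun k => m + K * εf (σ k)) atTop (𝓝 (m + K * 0)) :=
        tendsto_const_nhds.add (tendsto_const_nhds.mul hεσ)
      simpa using h1
    have hlek : ∀ k, ∑ p ∈ Epos, sC (J (σ k) p) (bb p + εf (σ k)) ≤ m + K * εf (σ k) :=
      fun k => le_trans (Finset.sum_le_sum_of_subset_of_nonneg (Finset.filter_subset _ _)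
        fun p hp _ => hterm_nonneg (σ k) p hp) (hJ4 (σ k))
    have hfinal : ∑ p ∈ Epos, sC (j p) (bb p) ≤ m :=
      le_of_tendsto_of_tendsto' hA hTm hlek
    refine le_trans (iInf₂_le j ⟨hjnn, hjdiv, fun x y hxy h0 => hjac (x, y) hxy h0⟩) ?_
    have hsum_eq : ∑ p ∈ Finset.univ.filter (fun p : 𝒳 × 𝒳 => p.1 ≠ p.2),
        sEnt (j p) (ρ p.1 * Q p.1 p.2)
        = ((∑ p ∈ Epos, sC (j p) (bb p) : ℝ) : EReal) := by
      have hstep1 : ∑ p ∈ Finset.univ.filter (fun p : 𝒳 × 𝒳 => p.1 ≠ p.2),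
          sEnt (j p) (ρ p.1 * Q p.1 p.2)
          = ∑ p ∈ OD 𝒳, ((sC (j p) (bb p) : ℝ) : EReal) :=
        Finset.sum_congr rfl fun p hp =>
          sEnt_eq_sC _ _ (hjnn p) (hbnn p (by simpa [OD] using hp))
            (hjac p (by simpa [OD] using hp))
      rw [hstep1, ← ereal_coe_sum]
      congr 1
      refine (Finset.sum_subset (Finset.filter_subset _ _) ?_).symm
      intro p hpOD hpE
      have hb0 : bb p = 0 := by
        have h1 := hbnn p (by simpa [OD] using hpOD)
        by_contra h2
        exact hpE (Finset.mem_filter.mpr ⟨hpOD, lt_of_le_of_ne h1 (Ne.symm h2)⟩)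
      have hj0 : j p = 0 := hjac p (by simpa [OD] using hpOD) hb0
      rw [hb0, hj0]
      simp [sC]
    rw [hsum_eq, ← hmS]
    exact EReal.coe_le_coe_iff.mpr hfinal
end
end
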